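/- arXiv:2301.12826 — 6 statements merged into one kernel-verified Lean document; each statement's English description precedes it below -/
import Mathlib

section
/- For every natural number s, the cardinality of the set 𝓗_s of fixed-point-free involutions π of {1,…,s}×{1,2} satisfying π(j,1) ≠ (j,2) for all 1 ≤ j ≤ s equals H_s := ∑_{j=0}^{s} C(s,j) (−1)^{s−j} μ_{2j}. -/
/-- `gaussMoment r` is the `r`-th moment `μ_r` of the standard Gaussian:
`μ_0 = 1`, `μ_{2n} = (2n-1)!!` and `μ_{2n+1} = 0`. -/
def gaussMoment (r : ℕ) : ℕ := if Even r then Nat.doubleFactorial (r - 1) else 0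

/-- `Hs s = ∑_{j=0}^{s} C(s,j) (−1)^{s−j} μ_{2j}`. -/
def Hs (s : ℕ) : ℤ :=
  ∑ j ∈ Finset.range (s + 1),
    (s.choose j : ℤ) * (-1) ^ (s - j) * (gaussMoment (2 * j) : ℤ)

namespace HsProof

/-- The space of fixed-point-free involutions avoiding the first `k` forbidden pairs. -/
abbrev Sp (n k : ℕ) :=
  {π : Fin n × Fin 2 → Fin n × Fin 2 //
    Function.Involutive π ∧ (∀ x, π x ≠ x) ∧
      ∀ j : Fin n, (j : ℕ) < k → π (j, 0) ≠ (j, 1)}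

noncomputable def A (n k : ℕ) : ℕ := Nat.card (Sp n k)

section Removal

variable {m : ℕ} (p : Fin (m + 1))

/-- Embedding of the smaller point set, skipping the pair at index `p`. -/
def E : Fin m × Fin 2 → Fin (m + 1) × Fin 2 := fun x => (p.succAbove x.1, x.2)

lemma E_inj : Function.Injective (E p) := by
  intro a b h
  simp only [E, Prod.mk.injEq] at h
  exact Prod.ext (Fin.succAbove_right_injective h.1) h.2

lemma E_fst_ne (x : Fin m × Fin 2) : (E p x).1 ≠ p := Fin.succAbove_ne p x.1

lemma exists_E {y : Fin (m + 1) × Fin 2} (h : y.1 ≠ p) : ∃ x, E p x = y := by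
  obtain ⟨i, hi⟩ := Fin.exists_succAbove_eq h
  exact ⟨(i, y.2), Prod.ext hi rfl⟩

lemma pair_cases {y : Fin (m + 1) × Fin 2} (h : y.1 = p) : y = (p, 0) ∨ y = (p, 1) := by
  have h2 : ∀ b : Fin 2, b = 0 ∨ b = 1 := by decide
  rcases h2 y.2 with hb | hb
  · exact Or.inl (Prod.ext h hb)
  · exact Or.inr (Prod.ext h hb)

variable {π : Fin (m + 1) × Fin 2 → Fin (m + 1) × Fin 2}

lemma fst_ne_p (hInv : Function.Involutive π) (hp : π (p, 0) = (p, 1))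
    (x : Fin m × Fin 2) : (π (E p x)).1 ≠ p := by
  intro h
  have hp1 : π (p, 1) = (p, 0) := by rw [← hp]; exact hInv _
  rcases pair_cases p h with h0 | h0
  · have := hInv (E p x)
    rw [h0, hp] at this
    exact E_fst_ne p x (congrArg Prod.fst this).symm
  · have := hInv (E p x)
    rw [h0, hp1] at this
    exact E_fst_ne p x (congrArg Prod.fst this).symm

/-- The restricted involution on the smaller point set. -/
def Fmap (π : Fin (m + 1) × Fin 2 → Fin (m + 1) × Fin 2) : Fin m × Fin 2 → Fin m × Fin 2 :=
  fun x => (((finSuccEquiv' p) (π (E p x)).1).getD x.1, (π (E p x)).2)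

lemma E_Fmap (hInv : Function.Involutive π) (hp : π (p, 0) = (p, 1)) (x : Fin m × Fin 2) :
    E p (Fmap p π x) = π (E p x) := by
  obtain ⟨y, hy⟩ := exists_E p (fst_ne_p p hInv hp x)
  rw [Fmap, ← hy]
  show (p.succAbove (((finSuccEquiv' p) (E p y).1).getD x.1), (E p y).2) = E p y
  simp only [E, finSuccEquiv'_succAbove, Option.getD_some]

/-- The extension of an involution on the smaller set, pairing `(p,0)` with `(p,1)`. -/
def Gmap (π' : Fin m × Fin 2 → Fin m × Fin 2) :
    Fin (m + 1) × Fin 2 → Fin (m + 1) × Fin 2 := fun y =>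
  match finSuccEquiv' p y.1 with
  | none => (p, y.2 + 1)
  | some i => E p (π' (i, y.2))

lemma Gmap_E (π' : Fin m × Fin 2 → Fin m × Fin 2) (x : Fin m × Fin 2) :
    Gmap p π' (E p x) = E p (π' x) := by
  show (match finSuccEquiv' p (p.succAbove x.1) with
    | none => (p, x.2 + 1)
    | some i => E p (π' (i, x.2))) = E p (π' x)
  rw [finSuccEquiv'_succAbove]

lemma Gmap_p (π' : Fin m × Fin 2 → Fin m × Fin 2) (b : Fin 2) :
    Gmap p π' (p, b) = (p, b + 1) := by
  show (match finSuccEquiv' p p with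
    | none => (p, b + 1)
    | some i => E p (π' (i, b))) = (p, b + 1)
  rw [finSuccEquiv'_at]


variable {t : ℕ}

lemma Fmap_mem (hts : t ≤ (p : ℕ))
    (h : Function.Involutive π ∧ (∀ x, π x ≠ x) ∧
      (∀ j : Fin (m + 1), (j : ℕ) < t → π (j, 0) ≠ (j, 1)) ∧ π (p, 0) = (p, 1)) :
    Function.Involutive (Fmap p π) ∧ (∀ x, Fmap p π x ≠ x) ∧
      ∀ j : Fin m, (j : ℕ) < t → Fmap p π (j, 0) ≠ (j, 1) := by
  obtain ⟨hInv, hfpf, hcond, hp⟩ := h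
  have key := E_Fmap p hInv hp
  refine ⟨?_, ?_, ?_⟩
  · intro x
    apply E_inj p
    rw [key, key, hInv]
  · intro x hx
    have h2 := key x
    rw [hx] at h2
    exact hfpf _ h2.symm
  · intro i hi hEq
    have hlt : Fin.castSucc i < p := by
      rw [Fin.lt_def]
      simpa using lt_of_lt_of_le hi hts
    have hE : ∀ b : Fin 2, E p (i, b) = (Fin.castSucc i, b) := by
      intro b
      simp [E, Fin.succAbove_of_castSucc_lt _ _ hlt]
    have h2 := key (i, 0)
    rw [hEq, hE, hE] at h2
    exact hcond (Fin.castSucc i) (by simpa using hi) h2.symm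

lemma Gmap_mem (hts : t ≤ (p : ℕ)) {π' : Fin m × Fin 2 → Fin m × Fin 2}
    (h : Function.Involutive π' ∧ (∀ x, π' x ≠ x) ∧
      ∀ j : Fin m, (j : ℕ) < t → π' (j, 0) ≠ (j, 1)) :
    Function.Involutive (Gmap p π') ∧ (∀ x, Gmap p π' x ≠ x) ∧
      (∀ j : Fin (m + 1), (j : ℕ) < t → Gmap p π' (j, 0) ≠ (j, 1)) ∧
      Gmap p π' (p, 0) = (p, 1) := by
  obtain ⟨hInv, hfpf, hcond⟩ := h
  have hadd2 : ∀ b : Fin 2, b + 1 + 1 = b := by decide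
  have hne1 : ∀ b : Fin 2, b + 1 ≠ b := by decide
  refine ⟨?_, ?_, ?_, ?_⟩
  · intro y
    by_cases hy : y.1 = p
    · rcases pair_cases p hy with rfl | rfl
      · rw [Gmap_p, Gmap_p, hadd2]
      · rw [Gmap_p, Gmap_p, hadd2]
    · obtain ⟨x, rfl⟩ := exists_E p hy
      rw [Gmap_E, Gmap_E, hInv]
  · intro y hy
    by_cases h1 : y.1 = p
    · rcases pair_cases p h1 with rfl | rfl
      · rw [Gmap_p] at hy
        exact hne1 _ (congrArg Prod.snd hy)
      · rw [Gmap_p] at hy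
        exact hne1 _ (congrArg Prod.snd hy)
    · obtain ⟨x, rfl⟩ := exists_E p h1
      rw [Gmap_E] at hy
      exact hfpf x (E_inj p hy)
  · intro j hj hEq
    have hjp : j ≠ p := by
      intro hh
      rw [hh] at hj
      omega
    obtain ⟨i, hi⟩ := Fin.exists_succAbove_eq hjp
    have hile : (i : ℕ) ≤ (j : ℕ) := by
      rcases lt_or_ge (Fin.castSucc i) p with hc | hc
      · rw [← hi, Fin.succAbove_of_castSucc_lt _ _ hc]; simp
      · rw [← hi, Fin.succAbove_of_le_castSucc _ _ hc]
        rw [Fin.val_succ]; omega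
    have hj0 : (j, (0 : Fin 2)) = E p (i, 0) := by simp [E, hi]
    have hj1 : (j, (1 : Fin 2)) = E p (i, 1) := by simp [E, hi]
    rw [hj0, hj1, Gmap_E] at hEq
    exact hcond i (by omega) (E_inj p hEq)
  · rw [Gmap_p]
    norm_num

/-- Removing the matched pair at index `p`. -/
def removalEquiv (hts : t ≤ (p : ℕ)) :
    {π : Fin (m + 1) × Fin 2 → Fin (m + 1) × Fin 2 //
      Function.Involutive π ∧ (∀ x, π x ≠ x) ∧
        (∀ j : Fin (m + 1), (j : ℕ) < t → π (j, 0) ≠ (j, 1)) ∧ π (p, 0) = (p, 1)} ≃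
      Sp m t where
  toFun π := ⟨Fmap p π.1, Fmap_mem p hts π.2⟩
  invFun π' := ⟨Gmap p π'.1, Gmap_mem p hts π'.2⟩
  left_inv := by
    rintro ⟨π, hInv, hfpf, hcond, hp⟩
    apply Subtype.ext
    funext y
    show Gmap p (Fmap p π) y = π y
    by_cases hy : y.1 = p
    · have hp1 : π (p, 1) = (p, 0) := by rw [← hp]; exact hInv _
      rcases pair_cases p hy with rfl | rfl
      · rw [Gmap_p, hp]
        exact Prod.ext rfl (show (0 : Fin 2) + 1 = 1 by decide)
      · rw [Gmap_p, hp1]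
        exact Prod.ext rfl (show (1 : Fin 2) + 1 = 0 by decide)
    · obtain ⟨x, rfl⟩ := exists_E p hy
      rw [Gmap_E, E_Fmap p hInv hp]
  right_inv := by
    rintro ⟨π', hmem⟩
    apply Subtype.ext
    funext x
    show Fmap p (Gmap p π') x = π' x
    apply E_inj p
    have hm := Gmap_mem p hts hmem
    rw [E_Fmap p hm.1 hm.2.2.2, Gmap_E]

lemma removal_card (hts : t ≤ (p : ℕ)) :
    Nat.card {π : Fin (m + 1) × Fin 2 → Fin (m + 1) × Fin 2 //
      Function.Involutive π ∧ (∀ x, π x ≠ x) ∧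
        (∀ j : Fin (m + 1), (j : ℕ) < t → π (j, 0) ≠ (j, 1)) ∧ π (p, 0) = (p, 1)} = A m t :=
  Nat.card_congr (removalEquiv p hts)

end Removal


lemma card_split {α : Type*} [Finite α] (P Q : α → Prop) :
    Nat.card {x // P x} = Nat.card {x // P x ∧ Q x} + Nat.card {x // P x ∧ ¬Q x} := by
  classical
  have e := (Equiv.sumCompl (fun y : {x // P x} => Q y.1)).symm
  rw [Nat.card_congr e, Nat.card_sum,
    Nat.card_congr (Equiv.subtypeSubtypeEquivSubtypeInter P Q),
    Nat.card_congr (Equiv.subtypeSubtypeEquivSubtypeInter P (fun x => ¬ Q x))]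

lemma A_split {n k : ℕ} (hk1 : 1 ≤ k) (hkn : k ≤ n) :
    A n (k - 1) = A n k + A (n - 1) (k - 1) := by
  obtain ⟨m, rfl⟩ : ∃ m, n = m + 1 := ⟨n - 1, by omega⟩
  obtain ⟨p, hpv⟩ : ∃ p : Fin (m + 1), (p : ℕ) = k - 1 := ⟨⟨k - 1, by omega⟩, rfl⟩
  have h3 : Nat.card {π : Fin (m + 1) × Fin 2 → Fin (m + 1) × Fin 2 //
      (Function.Involutive π ∧ (∀ x, π x ≠ x) ∧
        (∀ j : Fin (m + 1), (j : ℕ) < k - 1 → π (j, 0) ≠ (j, 1))) ∧ ¬π (p, 0) = (p, 1)}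
      = A (m + 1) k := by
    apply Nat.card_congr
    apply Equiv.subtypeEquivRight
    intro π
    constructor
    · rintro ⟨⟨hInv, hfpf, hcond⟩, hne⟩
      refine ⟨hInv, hfpf, ?_⟩
      intro j hj
      rcases lt_or_ge (j : ℕ) (k - 1) with hc | hc
      · exact hcond j hc
      · have hjp : j = p := Fin.ext (by omega)
        rw [hjp]; exact hne
    · rintro ⟨hInv, hfpf, hcond⟩
      refine ⟨⟨hInv, hfpf, ?_⟩, ?_⟩
      · intro j hj
        exact hcond j (by omega)
      · refine hcond p ?_
        omega
  have h2 : Nat.card {π : Fin (m + 1) × Fin 2 → Fin (m + 1) × Fin 2 //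
      (Function.Involutive π ∧ (∀ x, π x ≠ x) ∧
        (∀ j : Fin (m + 1), (j : ℕ) < k - 1 → π (j, 0) ≠ (j, 1))) ∧ π (p, 0) = (p, 1)}
      = A m (k - 1) := by
    rw [← removal_card p (t := k - 1) (le_of_eq hpv.symm)]
    exact Nat.card_congr (Equiv.subtypeEquivRight fun π => by tauto)
  have h1 := card_split
    (fun π : Fin (m + 1) × Fin 2 → Fin (m + 1) × Fin 2 =>
      Function.Involutive π ∧ (∀ x, π x ≠ x) ∧
        ∀ j : Fin (m + 1), (j : ℕ) < k - 1 → π (j, 0) ≠ (j, 1))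
    (fun π => π (p, 0) = (p, 1))
  calc A (m + 1) (k - 1)
      = Nat.card {π : Fin (m + 1) × Fin 2 → Fin (m + 1) × Fin 2 //
          Function.Involutive π ∧ (∀ x, π x ≠ x) ∧
            ∀ j : Fin (m + 1), (j : ℕ) < k - 1 → π (j, 0) ≠ (j, 1)} := rfl
    _ = _ + _ := h1
    _ = A m (k - 1) + A (m + 1) k := by rw [h2, h3]
    _ = A (m + 1) k + A m (k - 1) := Nat.add_comm _ _


lemma fin2_one_ne_zero : (1 : Fin 2) ≠ 0 := by decide

lemma card_sigma' {ι : Type*} [Fintype ι] (g : ι → Type*) [∀ i, Finite (g i)] :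
    Nat.card (Σ i, g i) = ∑ i, Nat.card (g i) := by
  letI : ∀ i, Fintype (g i) := fun i => Fintype.ofFinite _
  rw [Nat.card_eq_fintype_card, Fintype.card_sigma]
  exact Finset.sum_congr rfl fun i _ => (Nat.card_eq_fintype_card).symm

lemma conj_mem {n : ℕ} (a b c : Fin n × Fin 2) (hca : c ≠ a) (hcb : c ≠ b)
    (π : Fin n × Fin 2 → Fin n × Fin 2)
    (h : (Function.Involutive π ∧ (∀ x, π x ≠ x) ∧
        (∀ j : Fin n, (j : ℕ) < 0 → π (j, 0) ≠ (j, 1))) ∧ π c = a) :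
    (Function.Involutive (Equiv.swap a b ∘ π ∘ Equiv.swap a b) ∧
      (∀ x, (Equiv.swap a b ∘ π ∘ Equiv.swap a b) x ≠ x) ∧
      (∀ j : Fin n, (j : ℕ) < 0 →
        (Equiv.swap a b ∘ π ∘ Equiv.swap a b) (j, 0) ≠ (j, 1))) ∧
      (Equiv.swap a b ∘ π ∘ Equiv.swap a b) c = b := by
  classical
  obtain ⟨⟨hInv, hfpf, -⟩, hc⟩ := h
  have hswap : ∀ y, Equiv.swap a b (Equiv.swap a b y) = y :=
    fun y => Equiv.swap_apply_self a b y
  refine ⟨⟨?_, ?_, ?_⟩, ?_⟩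
  · intro x
    show Equiv.swap a b (π (Equiv.swap a b (Equiv.swap a b (π (Equiv.swap a b x))))) = x
    rw [hswap, hInv, hswap]
  · intro x hx
    apply hfpf (Equiv.swap a b x)
    calc π (Equiv.swap a b x)
        = Equiv.swap a b (Equiv.swap a b (π (Equiv.swap a b x))) := (hswap _).symm
      _ = Equiv.swap a b x := congrArg (Equiv.swap a b) hx
  · intro j hj
    exact absurd hj (Nat.not_lt_zero _)
  · show Equiv.swap a b (π (Equiv.swap a b c)) = b
    rw [Equiv.swap_apply_of_ne_of_ne hca hcb, hc, Equiv.swap_apply_left]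

lemma conj_card {n : ℕ} (a b c : Fin n × Fin 2) (hca : c ≠ a) (hcb : c ≠ b) :
    Nat.card {π : Fin n × Fin 2 → Fin n × Fin 2 //
      (Function.Involutive π ∧ (∀ x, π x ≠ x) ∧
        (∀ j : Fin n, (j : ℕ) < 0 → π (j, 0) ≠ (j, 1))) ∧ π c = a}
    = Nat.card {π : Fin n × Fin 2 → Fin n × Fin 2 //
      (Function.Involutive π ∧ (∀ x, π x ≠ x) ∧
        (∀ j : Fin n, (j : ℕ) < 0 → π (j, 0) ≠ (j, 1))) ∧ π c = b} := by
  classical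
  apply Nat.card_congr
  have hswap : ∀ (x : Fin n × Fin 2), Equiv.swap a b (Equiv.swap a b x) = x :=
    fun x => Equiv.swap_apply_self a b x
  have hcomm : Equiv.swap b a = Equiv.swap a b := Equiv.swap_comm b a
  refine ⟨fun π => ⟨Equiv.swap a b ∘ π.1 ∘ Equiv.swap a b, conj_mem a b c hca hcb π.1 π.2⟩,
          fun π => ⟨Equiv.swap a b ∘ π.1 ∘ Equiv.swap a b, ?_⟩, ?_, ?_⟩
  · rw [← hcomm]
    exact conj_mem b a c hcb hca π.1 π.2
  · rintro ⟨π, hπ⟩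
    apply Subtype.ext
    funext x
    show Equiv.swap a b (Equiv.swap a b (π (Equiv.swap a b (Equiv.swap a b x)))) = π x
    rw [hswap, hswap]
  · rintro ⟨π, hπ⟩
    apply Subtype.ext
    funext x
    show Equiv.swap a b (Equiv.swap a b (π (Equiv.swap a b (Equiv.swap a b x)))) = π x
    rw [hswap, hswap]

def fMap (m : ℕ) : Sp (m + 1) 0 → {a : Fin (m + 1) × Fin 2 // a ≠ (Fin.last m, 1)} :=
  fun π => ⟨π.1 (Fin.last m, 1), π.2.2.1 _⟩

lemma A_step (m : ℕ) : A (m + 1) 0 = (2 * m + 1) * A m 0 := by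
  classical
  have h2 : ∀ a : {a : Fin (m + 1) × Fin 2 // a ≠ (Fin.last m, 1)},
      Nat.card {π : Sp (m + 1) 0 // fMap m π = a} = A m 0 := by
    intro a
    have e1 : {π : Sp (m + 1) 0 // fMap m π = a} ≃
        {π : Fin (m + 1) × Fin 2 → Fin (m + 1) × Fin 2 //
          (Function.Involutive π ∧ (∀ x, π x ≠ x) ∧
            (∀ j : Fin (m + 1), (j : ℕ) < 0 → π (j, 0) ≠ (j, 1))) ∧
          π (Fin.last m, 1) = a.1} :=
      (Equiv.subtypeEquivRight
          (p := fun π : Sp (m + 1) 0 => fMap m π = a)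
          (q := fun π : Sp (m + 1) 0 => π.1 (Fin.last m, 1) = a.1)
          (fun π => Subtype.ext_iff)).trans
        (Equiv.subtypeSubtypeEquivSubtypeInter
          (fun π : Fin (m + 1) × Fin 2 → Fin (m + 1) × Fin 2 =>
            Function.Involutive π ∧ (∀ x, π x ≠ x) ∧
              (∀ j : Fin (m + 1), (j : ℕ) < 0 → π (j, 0) ≠ (j, 1)))
          (fun π => π (Fin.last m, 1) = a.1))
    rw [Nat.card_congr e1,
      conj_card a.1 (Fin.last m, 0) (Fin.last m, 1) (Ne.symm a.2)
        (fun h => fin2_one_ne_zero (congrArg Prod.snd h)),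
      ← removal_card (Fin.last m) (t := 0) (Nat.zero_le _)]
    apply Nat.card_congr
    apply Equiv.subtypeEquivRight
    intro π
    constructor
    · rintro ⟨⟨hInv, hfpf, hcond⟩, hp⟩
      refine ⟨hInv, hfpf, hcond, ?_⟩
      rw [← hp]; exact hInv _
    · rintro ⟨hInv, hfpf, hcond, hp⟩
      refine ⟨⟨hInv, hfpf, hcond⟩, ?_⟩
      rw [← hp]; exact hInv _
  have h1 : Nat.card (Sp (m + 1) 0)
      = ∑ a : {a : Fin (m + 1) × Fin 2 // a ≠ (Fin.last m, 1)},
          Nat.card {π : Sp (m + 1) 0 // fMap m π = a} := by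
    rw [← card_sigma']
    exact Nat.card_congr (Equiv.sigmaFiberEquiv (fMap m)).symm
  have hcardsub : Fintype.card {a : Fin (m + 1) × Fin 2 // a ≠ (Fin.last m, 1)}
      = 2 * m + 1 := by
    rw [Fintype.card_subtype_compl, Fintype.card_subtype_eq, Fintype.card_prod,
      Fintype.card_fin, Fintype.card_fin]
    omega
  show Nat.card (Sp (m + 1) 0) = (2 * m + 1) * A m 0
  rw [h1, Finset.sum_congr rfl (fun a _ => h2 a), Finset.sum_const, smul_eq_mul,
    Finset.card_univ, hcardsub]



lemma A_zero_zero : A 0 0 = 1 := by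
  haveI : Unique (Sp 0 0) :=
    { default := ⟨id, fun x => rfl, fun x => x.1.elim0, fun j => j.elim0⟩,
      uniq := fun π => Subtype.ext (funext fun x => x.1.elim0) }
  exact Nat.card_unique

lemma gm_succ (m : ℕ) : gaussMoment (2 * (m + 1)) = (2 * m + 1) * gaussMoment (2 * m) := by
  cases m with
  | zero => decide
  | succ m' =>
    simp only [gaussMoment, if_pos (even_two_mul _)]
    have h1 : 2 * (m' + 1 + 1) - 1 = (2 * m' + 1) + 2 := by omega
    have h2 : 2 * (m' + 1) - 1 = 2 * m' + 1 := by omega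
    rw [h1, h2, Nat.doubleFactorial_add_two]
    have h3 : 2 * m' + 1 + 2 = 2 * (m' + 1) + 1 := by omega
    rw [h3]

lemma A_zero (n : ℕ) : A n 0 = gaussMoment (2 * n) := by
  induction n with
  | zero => rw [A_zero_zero]; decide
  | succ m ih => rw [A_step, ih, ← gm_succ]

lemma pascal_sum (g : ℕ → ℤ) (k : ℕ) :
    ∑ i ∈ Finset.range (k + 2), (-1 : ℤ) ^ i * ((k + 1).choose i : ℤ) * g i
      = ∑ i ∈ Finset.range (k + 1), (-1 : ℤ) ^ i * (k.choose i : ℤ) * g i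
        - ∑ i ∈ Finset.range (k + 1), (-1 : ℤ) ^ i * (k.choose i : ℤ) * g (i + 1) := by
  have h1 : ∑ i ∈ Finset.range (k + 2), (-1 : ℤ) ^ i * ((k + 1).choose i : ℤ) * g i
      = (∑ i ∈ Finset.range (k + 1),
          ((-1 : ℤ) ^ (i + 1) * (k.choose i : ℤ) * g (i + 1)
            + (-1 : ℤ) ^ (i + 1) * (k.choose (i + 1) : ℤ) * g (i + 1)))
        + (-1 : ℤ) ^ 0 * ((k + 1).choose 0 : ℤ) * g 0 := by
    rw [Finset.sum_range_succ']
    congr 1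
    apply Finset.sum_congr rfl
    intro i _
    rw [Nat.choose_succ_succ]
    push_cast
    ring
  have h3 : ∑ i ∈ Finset.range (k + 1),
        (-1 : ℤ) ^ (i + 1) * (k.choose (i + 1) : ℤ) * g (i + 1)
      = ∑ i ∈ Finset.range k, (-1 : ℤ) ^ (i + 1) * (k.choose (i + 1) : ℤ) * g (i + 1) := by
    rw [Finset.sum_range_succ, Nat.choose_succ_self]
    simp
  have h2 : ∑ i ∈ Finset.range (k + 1), (-1 : ℤ) ^ i * (k.choose i : ℤ) * g i
      = (∑ i ∈ Finset.range k,
          (-1 : ℤ) ^ (i + 1) * (k.choose (i + 1) : ℤ) * g (i + 1))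
        + (-1 : ℤ) ^ 0 * (k.choose 0 : ℤ) * g 0 := by
    rw [Finset.sum_range_succ']
  have h4 : ∑ i ∈ Finset.range (k + 1),
        ((-1 : ℤ) ^ (i + 1) * (k.choose i : ℤ) * g (i + 1)
          + (-1 : ℤ) ^ (i + 1) * (k.choose (i + 1) : ℤ) * g (i + 1))
      = (∑ i ∈ Finset.range (k + 1), -((-1 : ℤ) ^ i * (k.choose i : ℤ) * g (i + 1)))
        + ∑ i ∈ Finset.range (k + 1),
            (-1 : ℤ) ^ (i + 1) * (k.choose (i + 1) : ℤ) * g (i + 1) := by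
    rw [← Finset.sum_add_distrib]
    apply Finset.sum_congr rfl
    intro i _
    ring
  rw [h1, h2, h4, h3, Finset.sum_neg_distrib]
  simp only [pow_zero, Nat.choose_zero_right, Nat.cast_one, one_mul]
  ring

lemma A_eq (k : ℕ) : ∀ n : ℕ, k ≤ n →
    (A n k : ℤ) = ∑ i ∈ Finset.range (k + 1),
      (-1 : ℤ) ^ i * (k.choose i : ℤ) * (gaussMoment (2 * (n - i)) : ℤ) := by
  induction k with
  | zero =>
    intro n _
    simp [A_zero n]
  | succ k ih =>
    intro n hn
    have hsplit : A n k = A n (k + 1) + A (n - 1) k := A_split (by omega) hn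
    have hz : (A n (k + 1) : ℤ) = (A n k : ℤ) - (A (n - 1) k : ℤ) := by
      omega
    rw [hz, ih n (by omega), ih (n - 1) (by omega),
      pascal_sum (fun i => (gaussMoment (2 * (n - i)) : ℤ)) k]
    congr 1
    apply Finset.sum_congr rfl
    intro i hi
    have he : n - 1 - i = n - (i + 1) := by omega
    rw [he]

end HsProof

/-- The number of fixed-point-free involutions `π` of `{1,…,s} × {1,2}` with
`π (j,1) ≠ (j,2)` for all `j` equals `H_s`. -/
theorem card_fixedPointFree_involutions_eq_Hs (s : ℕ) :
    (Nat.card {π : Fin s × Fin 2 → Fin s × Fin 2 //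
        Function.Involutive π ∧ (∀ x, π x ≠ x) ∧
          ∀ j : Fin s, π (j, 0) ≠ (j, 1)} : ℤ) = Hs s := by
  classical
  have h0 : Nat.card {π : Fin s × Fin 2 → Fin s × Fin 2 //
      Function.Involutive π ∧ (∀ x, π x ≠ x) ∧ ∀ j : Fin s, π (j, 0) ≠ (j, 1)}
      = HsProof.A s s := by
    apply Nat.card_congr
    apply Equiv.subtypeEquivRight
    intro π
    constructor
    · rintro ⟨h1, h2, h3⟩
      exact ⟨h1, h2, fun j _ => h3 j⟩
    · rintro ⟨h1, h2, h3⟩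
      exact ⟨h1, h2, fun j => h3 j j.isLt⟩
  rw [h0, HsProof.A_eq s s le_rfl, Hs]
  clear h0
  rw [← Finset.sum_range_reflect]
  apply Finset.sum_congr rfl
  intro i hi
  have hi' : i ≤ s := by
    rw [Finset.mem_range] at hi
    omega
  have h1 : s + 1 - 1 - i = s - i := by omega
  have h2 : s - (s - i) = i := by omega
  rw [h1, Nat.choose_symm hi', h2]
  ring
end

section
/- For every natural number s, ∑_{k=0}^{s} C(s,k) |𝓗_{s−k}| = μ_{2s}, where |𝓗_{s−k}| is the number of fixed-point-free involutions π of {1,…,s−k}×{1,2} with π(j,1) ≠ (j,2) for all j. -/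
open Finset

/-- fixed-point-free involutions on `α` -/
def FPF (α : Type*) : Type _ :=
  {π : α → α // Function.Involutive π ∧ ∀ x, π x ≠ x}

def FPF.congr {α β : Type*} (e : α ≃ β) : FPF α ≃ FPF β where
  toFun π := ⟨fun b => e (π.1 (e.symm b)), fun b => by simp [π.2.1 (e.symm b)],
    fun b hb => π.2.2 (e.symm b) (by simpa using congrArg e.symm hb)⟩
  invFun σ := ⟨fun a => e.symm (σ.1 (e a)), fun a => by simp [σ.2.1 (e a)],
    fun a ha => σ.2.2 (e a) (by simpa using congrArg e ha)⟩
  left_inv π := Subtype.ext (funext fun a => by simp)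
  right_inv σ := Subtype.ext (funext fun b => by simp)

lemma card_FPF_congr {α β : Type*} (e : α ≃ β) : Nat.card (FPF α) = Nat.card (FPF β) :=
  Nat.card_congr (FPF.congr e)

noncomputable def Nfpf (n : ℕ) : ℕ := Nat.card (FPF (Fin n))

instance : Unique (FPF (Fin 0)) where
  default := ⟨id, fun x => x.elim0, fun x => x.elim0⟩
  uniq π := Subtype.ext (funext fun x => x.elim0)

lemma Nfpf_zero : Nfpf 0 = 1 := Nat.card_unique

section Recurrence
variable {n : ℕ}

/-- glue a transposition `0 ↔ b` with an FPF involution on the complement -/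
def ofPair (b : Fin (n + 2)) (hb : b ≠ 0)
    (σ : FPF {x : Fin (n + 2) // x ≠ 0 ∧ x ≠ b}) : FPF (Fin (n + 2)) := by
  refine ⟨fun x => if hx : x = 0 then b else if hx2 : x = b then 0
    else (σ.1 ⟨x, hx, hx2⟩).1, ?_, ?_⟩
  · intro x
    by_cases hx : x = 0
    · subst hx; simp [hb]
    · by_cases hx2 : x = b
      · subst hx2; simp [hx]
      · have h1 := (σ.1 ⟨x, hx, hx2⟩).2.1
        have h2 := (σ.1 ⟨x, hx, hx2⟩).2.2
        simp only [dif_neg hx, dif_neg hx2, dif_neg h1, dif_neg h2]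
        have : (⟨(σ.1 ⟨x, hx, hx2⟩).1, h1, h2⟩ : {x : Fin (n + 2) // x ≠ 0 ∧ x ≠ b})
            = σ.1 ⟨x, hx, hx2⟩ := Subtype.ext rfl
        rw [this, σ.2.1]
  · intro x hx'
    by_cases hx : x = 0
    · subst hx; simp only [dif_pos rfl] at hx'; exact hb hx'
    · by_cases hx2 : x = b
      · subst hx2; simp only [dif_neg hx, dif_pos rfl] at hx'; exact hx hx'.symm
      · simp only [dif_neg hx, dif_neg hx2] at hx'
        exact σ.2.2 ⟨x, hx, hx2⟩ (Subtype.ext hx')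

lemma ofPair_injective :
    Function.Injective (fun p : Σ b : {b : Fin (n + 2) // b ≠ 0},
        FPF {x : Fin (n + 2) // x ≠ 0 ∧ x ≠ b.1} => ofPair p.1.1 p.1.2 p.2) := by
  rintro ⟨⟨b, hb⟩, σ⟩ ⟨⟨b', hb'⟩, σ'⟩ h
  simp only at h
  have hfun := congrFun (congrArg Subtype.val h)
  have hbb : b = b' := by
    have := hfun 0
    simpa [ofPair] using this
  subst hbb
  have hσ : σ = σ' := by
    apply Subtype.ext; funext y
    obtain ⟨x, hx, hx2⟩ := y
    have := hfun x
    simp only [ofPair, dif_neg hx, dif_neg hx2] at this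
    exact Subtype.ext this
  subst hσ
  rfl

lemma ofPair_surjective :
    Function.Surjective (fun p : Σ b : {b : Fin (n + 2) // b ≠ 0},
        FPF {x : Fin (n + 2) // x ≠ 0 ∧ x ≠ b.1} => ofPair p.1.1 p.1.2 p.2) := by
  intro π
  have hb : π.1 0 ≠ 0 := π.2.2 0
  refine ⟨⟨⟨π.1 0, hb⟩, ⟨fun y => ⟨π.1 y.1, ?_, ?_⟩, ?_, ?_⟩⟩, ?_⟩
  · intro h0
    apply y.2.2
    show (y : Fin (n+2)) = π.1 0
    calc (y : Fin (n+2)) = π.1 (π.1 y.1) := (π.2.1 y.1).symm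
      _ = π.1 0 := by rw [h0]
  · intro h0
    exact y.2.1 (π.2.1.injective h0)
  · intro y; exact Subtype.ext (π.2.1 y.1)
  · intro y hy; exact π.2.2 y.1 (congrArg Subtype.val hy)
  · apply Subtype.ext; funext x
    by_cases hx : x = 0
    · subst hx; simp [ofPair]
    · by_cases hx2 : x = π.1 0
      · subst hx2
        simp only [ofPair, dif_neg hx, dif_pos rfl]
        exact (π.2.1 0).symm
      · simp only [ofPair, dif_neg hx, dif_neg hx2]

instance {α : Type*} [Finite α] : Finite (FPF α) := by
  unfold FPF; infer_instance

lemma nat_card_sigma {ι : Type*} [Fintype ι] (f : ι → Type*) [∀ i, Finite (f i)] :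
    Nat.card (Σ i, f i) = ∑ i, Nat.card (f i) := by
  letI := fun i => Fintype.ofFinite (f i)
  simp [Nat.card_eq_fintype_card, Fintype.card_sigma]

lemma card_compl_two {b : Fin (n + 2)} (hb : b ≠ 0) :
    Fintype.card {x : Fin (n + 2) // x ≠ 0 ∧ x ≠ b} = n := by
  have h1 : ∀ x : Fin (n + 2), (x ≠ 0 ∧ x ≠ b) ↔ x ∈ ({0, b} : Finset (Fin (n + 2)))ᶜ := by
    intro x; simp [not_or]
  rw [Fintype.card_congr (Equiv.subtypeEquivRight h1), Fintype.card_coe, Finset.card_compl]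
  rw [Finset.card_insert_of_notMem (by simpa using hb.symm), Finset.card_singleton]
  simp

lemma Nfpf_rec : Nfpf (n + 2) = (n + 1) * Nfpf n := by
  have hbij : Function.Bijective (fun p : Σ b : {b : Fin (n + 2) // b ≠ 0},
      FPF {x : Fin (n + 2) // x ≠ 0 ∧ x ≠ b.1} => ofPair p.1.1 p.1.2 p.2) :=
    ⟨ofPair_injective, ofPair_surjective⟩
  rw [Nfpf, ← Nat.card_eq_of_bijective _ hbij, nat_card_sigma]
  have hfib : ∀ b : {b : Fin (n + 2) // b ≠ 0},
      Nat.card (FPF {x : Fin (n + 2) // x ≠ 0 ∧ x ≠ b.1}) = Nfpf n := by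
    intro b
    exact card_FPF_congr (Fintype.equivFinOfCardEq (card_compl_two b.2))
  rw [Finset.sum_congr rfl fun b _ => hfib b, Finset.sum_const, Finset.card_univ, smul_eq_mul]
  congr 1
  have h1 : ∀ x : Fin (n + 2), (x ≠ 0) ↔ x ∈ ({0} : Finset (Fin (n + 2)))ᶜ := by
    intro x; simp
  rw [Fintype.card_congr (Equiv.subtypeEquivRight h1), Fintype.card_coe, Finset.card_compl]
  simp

lemma Nfpf_two_mul (s : ℕ) : Nfpf (2 * s) = Nat.doubleFactorial (2 * s - 1) := by
  induction s with
  | zero => simpa using Nfpf_zero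
  | succ s ih =>
    have h2 : 2 * (s + 1) = 2 * s + 2 := by ring
    rw [h2, Nfpf_rec, ih]
    cases s with
    | zero => simp [Nat.doubleFactorial]
    | succ s =>
      have h3 : 2 * (s + 1) + 2 - 1 = (2 * (s + 1) - 1) + 2 := by omega
      rw [h3, Nat.doubleFactorial_add_two]
      congr 1

section Partition
variable {s : ℕ}

/-- the 𝓗-type involutions -/
def Hset (ι : Type*) : Type _ :=
  {π : ι × Fin 2 → ι × Fin 2 // Function.Involutive π ∧ (∀ x, π x ≠ x) ∧
    ∀ j : ι, π (j, 0) ≠ (j, 1)}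

instance {ι : Type*} [Finite ι] : Finite (Hset ι) := by
  unfold Hset; infer_instance

lemma involutive_conj {γ δ : Type*} (E : γ ≃ δ) (f : γ → γ) :
    Function.Involutive (E.conj f) ↔ Function.Involutive f := by
  constructor
  · intro h x
    exact E.injective (by simpa [Equiv.conj_apply] using h (E x))
  · intro h x
    simp [Equiv.conj_apply, h _]

lemma fpf_conj {γ δ : Type*} (E : γ ≃ δ) (f : γ → γ) :
    (∀ x, E.conj f x ≠ x) ↔ (∀ x, f x ≠ x) := by
  constructor
  · intro h x hx
    exact h (E x) (by rw [Equiv.conj_apply, E.symm_apply_apply, hx])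
  · intro h x hx
    exact h (E.symm x) (by simpa [Equiv.conj_apply, Equiv.apply_eq_iff_eq_symm_apply] using hx)

def Hset.congr {ι ι' : Type*} (e : ι ≃ ι') : Hset ι ≃ Hset ι' := by
  refine (Equiv.prodCongr e (Equiv.refl (Fin 2))).conj.subtypeEquiv fun π => ?_
  set E := Equiv.prodCongr e (Equiv.refl (Fin 2)) with hE
  have hEs : ∀ (j : ι') (c : Fin 2), E.symm (j, c) = (e.symm j, c) := fun j c => rfl
  have hEa : ∀ (j : ι) (c : Fin 2), E (j, c) = (e j, c) := fun j c => rfl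
  constructor
  · rintro ⟨h1, h2, h3⟩
    refine ⟨(involutive_conj E π).mpr h1, (fpf_conj E π).mpr h2, fun j hj => ?_⟩
    apply h3 (e.symm j)
    have := congrArg E.symm hj
    rw [Equiv.conj_apply, Equiv.symm_apply_apply, hEs, hEs] at this
    exact this
  · rintro ⟨h1, h2, h3⟩
    refine ⟨(involutive_conj E π).mp h1, (fpf_conj E π).mp h2, fun j hj => ?_⟩
    apply h3 (e j)
    rw [Equiv.conj_apply]
    have h4 : E.symm (e j, (0 : Fin 2)) = (j, 0) := by rw [hEs, Equiv.symm_apply_apply]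
    rw [h4, hj, hEa]

lemma card_Hset_congr {ι ι' : Type*} (e : ι ≃ ι') : Nat.card (Hset ι) = Nat.card (Hset ι') :=
  Nat.card_congr (Hset.congr e)

noncomputable def hcard (m : ℕ) : ℕ := Nat.card (Hset (Fin m))

end Partition

section Part2
variable {s : ℕ}

def Sfix (π : FPF (Fin s × Fin 2)) : Finset (Fin s) :=
  univ.filter fun j => π.1 (j, 0) = (j, 1)

lemma mem_Sfix {π : FPF (Fin s × Fin 2)} {j : Fin s} :
    j ∈ Sfix π ↔ π.1 (j, 0) = (j, 1) := by simp [Sfix]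

lemma Sfix_closed (π : FPF (Fin s × Fin 2)) {j : Fin s} (hj : j ∉ Sfix π) (c : Fin 2) :
    (π.1 (j, c)).1 ∉ Sfix π := by
  intro hmem
  rw [mem_Sfix] at hmem hj
  set p := π.1 (j, c) with hp
  have hpp : π.1 (p.1, p.2) = (j, c) := by rw [Prod.mk.eta, hp, π.2.1]
  have h1 : π.1 (p.1, 1) = (p.1, 0) := by
    have h2 := congrArg π.1 hmem
    rw [π.2.1] at h2
    exact h2.symm
  have hd : p.2 = 0 ∨ p.2 = 1 := by omega
  rcases hd with hd | hd
  · have hpe : ((p.1, (0 : Fin 2)) : Fin s × Fin 2) = (p.1, p.2) := by rw [hd]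
    have h5 : (j, c) = (p.1, (1 : Fin 2)) := by rw [← hmem, hpe, hpp]
    have hj1 : j = p.1 := congrArg Prod.fst h5
    exact hj (by rw [hj1]; exact hmem)
  · have hpe : ((p.1, (1 : Fin 2)) : Fin s × Fin 2) = (p.1, p.2) := by rw [hd]
    have h5 : (j, c) = (p.1, (0 : Fin 2)) := by rw [← h1, hpe, hpp]
    have hj1 : j = p.1 := congrArg Prod.fst h5
    exact hj (by rw [hj1]; exact hmem)

def toH (π : FPF (Fin s × Fin 2)) : Hset ((Sfix π)ᶜ : Finset (Fin s)) := by
  refine ⟨fun x => (⟨(π.1 (x.1.1, x.2)).1,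
      Finset.mem_compl.mpr (Sfix_closed π (Finset.mem_compl.mp x.1.2) x.2)⟩,
      (π.1 (x.1.1, x.2)).2), ?_, ?_, ?_⟩
  · rintro ⟨⟨j, hj⟩, c⟩
    have hpp : π.1 ((π.1 (j, c)).1, (π.1 (j, c)).2) = (j, c) := by
      rw [Prod.mk.eta]; exact π.2.1 _
    refine Prod.ext (Subtype.ext ?_) ?_ <;> simp only [hpp]
  · rintro ⟨⟨j, hj⟩, c⟩ hx
    rw [Prod.ext_iff] at hx
    exact π.2.2 (j, c) (Prod.ext (congrArg Subtype.val hx.1) hx.2)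
  · rintro ⟨j, hj⟩ hj2
    rw [Prod.ext_iff] at hj2
    have h3 : π.1 (j, 0) = (j, 1) := Prod.ext (congrArg Subtype.val hj2.1) hj2.2
    exact (Finset.mem_compl.mp hj) (mem_Sfix.mpr h3)

def ofH (S : Finset (Fin s)) (σ : Hset ((Sᶜ : Finset (Fin s)))) : FPF (Fin s × Fin 2) := by
  refine ⟨fun x => if h : x.1 ∈ S then (x.1, x.2 + 1)
    else ((σ.1 (⟨x.1, Finset.mem_compl.mpr h⟩, x.2)).1.1,
          (σ.1 (⟨x.1, Finset.mem_compl.mpr h⟩, x.2)).2), ?_, ?_⟩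
  · intro x
    dsimp only
    by_cases h : x.1 ∈ S
    · rw [dif_pos h, dif_pos h]
      refine Prod.ext rfl ?_
      have h2 : x.2 = 0 ∨ x.2 = 1 := by omega
      rcases h2 with h2 | h2 <;> rw [h2] <;> rfl
    · rw [dif_neg h]
      have hv : (σ.1 (⟨x.1, Finset.mem_compl.mpr h⟩, x.2)).1.1 ∉ S :=
        Finset.mem_compl.mp (σ.1 (⟨x.1, Finset.mem_compl.mpr h⟩, x.2)).1.2
      rw [dif_neg hv]
      have hy' : ((⟨(σ.1 (⟨x.1, Finset.mem_compl.mpr h⟩, x.2)).1.1,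
          Finset.mem_compl.mpr hv⟩ : ((Sᶜ : Finset (Fin s)) : Type)),
          (σ.1 (⟨x.1, Finset.mem_compl.mpr h⟩, x.2)).2)
          = σ.1 (⟨x.1, Finset.mem_compl.mpr h⟩, x.2) :=
        Prod.ext (Subtype.ext rfl) rfl
      rw [hy', σ.2.1]
  · intro x hx
    dsimp only at hx
    by_cases h : x.1 ∈ S
    · rw [dif_pos h] at hx
      have h3 := congrArg Prod.snd hx
      simp only at h3
      have h2 : x.2 = 0 ∨ x.2 = 1 := by omega
      rcases h2 with h2 | h2 <;> rw [h2] at h3 <;> exact absurd h3 (by decide)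
    · rw [dif_neg h] at hx
      rw [Prod.ext_iff] at hx
      exact σ.2.2.1 (⟨x.1, Finset.mem_compl.mpr h⟩, x.2)
        (Prod.ext (Subtype.ext hx.1) hx.2)

end Part2

section Part3
variable {s : ℕ}

lemma ofH_apply_mem {S : Finset (Fin s)} {σ : Hset ((Sᶜ : Finset (Fin s)))} {j : Fin s}
    (h : j ∈ S) (c : Fin 2) : (ofH S σ).1 (j, c) = (j, c + 1) := dif_pos h

lemma ofH_apply_notMem {S : Finset (Fin s)} {σ : Hset ((Sᶜ : Finset (Fin s)))} {j : Fin s}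
    (h : j ∉ S) (c : Fin 2) : (ofH S σ).1 (j, c) =
      ((σ.1 (⟨j, Finset.mem_compl.mpr h⟩, c)).1.1,
       (σ.1 (⟨j, Finset.mem_compl.mpr h⟩, c)).2) := dif_neg h

lemma ofH_toH (π : FPF (Fin s × Fin 2)) : ofH (Sfix π) (toH π) = π := by
  apply Subtype.ext; funext x
  by_cases h : x.1 ∈ Sfix π
  · have h0 : π.1 (x.1, 0) = (x.1, 1) := mem_Sfix.mp h
    have h1 : π.1 (x.1, 1) = (x.1, 0) := by
      have h2 := congrArg π.1 h0
      rw [π.2.1] at h2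
      exact h2.symm
    have h2 : x.2 = 0 ∨ x.2 = 1 := by omega
    rcases h2 with h2 | h2
    · have hx : x = (x.1, (0 : Fin 2)) := Prod.ext rfl h2
      rw [hx, ofH_apply_mem h, h0]
      rfl
    · have hx : x = (x.1, (1 : Fin 2)) := Prod.ext rfl h2
      rw [hx, ofH_apply_mem h, h1]
      rfl
  · show (ofH (Sfix π) (toH π)).1 (x.1, x.2) = π.1 x
    rw [ofH_apply_notMem h]
    exact Prod.mk.eta

lemma Sfix_ofH (S : Finset (Fin s)) (σ : Hset ((Sᶜ : Finset (Fin s)))) : Sfix (ofH S σ) = S := by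
  ext j
  rw [mem_Sfix]
  by_cases hjS : j ∈ S
  · refine ⟨fun _ => hjS, fun _ => ?_⟩
    rw [ofH_apply_mem hjS]
    rfl
  · constructor
    · intro hj
      exfalso
      rw [ofH_apply_notMem hjS] at hj
      rw [Prod.ext_iff] at hj
      exact σ.2.2.2 ⟨j, Finset.mem_compl.mpr hjS⟩ (Prod.ext (Subtype.ext hj.1) hj.2)
    · intro hj
      exact absurd hj hjS

lemma ofH_inj : Function.Injective
    (fun p : Σ S : Finset (Fin s), Hset ((Sᶜ : Finset (Fin s))) => ofH p.1 p.2) := by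
  rintro ⟨S, σ⟩ ⟨S', σ'⟩ h
  simp only at h
  have hS : S = S' := by rw [← Sfix_ofH S σ, h, Sfix_ofH]
  subst hS
  have hσ : σ = σ' := by
    apply Subtype.ext; funext y
    obtain ⟨⟨j, hj⟩, c⟩ := y
    have hjS : j ∉ S := Finset.mem_compl.mp hj
    have h1 := congrFun (congrArg Subtype.val h) (j, c)
    rw [ofH_apply_notMem hjS, ofH_apply_notMem hjS] at h1
    rw [Prod.ext_iff] at h1
    exact Prod.ext (Subtype.ext h1.1) h1.2
  subst hσ
  rfl

lemma card_partition :
    Nat.card (FPF (Fin s × Fin 2)) = ∑ k ∈ range (s + 1), s.choose k * hcard (s - k) := by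
  have hbij : Function.Bijective
      (fun p : Σ S : Finset (Fin s), Hset ((Sᶜ : Finset (Fin s))) => ofH p.1 p.2) :=
    ⟨ofH_inj, fun π => ⟨⟨Sfix π, toH π⟩, ofH_toH π⟩⟩
  rw [← Nat.card_eq_of_bijective _ hbij, nat_card_sigma]
  have hfib : ∀ S : Finset (Fin s),
      Nat.card (Hset ((Sᶜ : Finset (Fin s)))) = hcard (s - S.card) := by
    intro S
    apply card_Hset_congr
    apply Fintype.equivFinOfCardEq
    rw [Fintype.card_coe, Finset.card_compl, Fintype.card_fin]
  rw [Finset.sum_congr rfl fun S _ => hfib S, ← Finset.powerset_univ,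
    Finset.sum_powerset_apply_card (fun m => hcard (s - m))]
  simp [Finset.card_univ, smul_eq_mul]

end Part3

/-- `∑_{k=0}^{s} C(s,k) |𝓗_{s−k}| = μ_{2s}`, where `𝓗_m` is the set of
fixed-point-free involutions `π` of `{1,…,m} × {1,2}` with `π (j,1) ≠ (j,2)` for all `j`. -/
theorem sum_choose_card_involutions_eq_gaussMoment (s : ℕ) :
    ∑ k ∈ Finset.range (s + 1),
      s.choose k *
        Nat.card {π : Fin (s - k) × Fin 2 → Fin (s - k) × Fin 2 //
          Function.Involutive π ∧ (∀ x, π x ≠ x) ∧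
            ∀ j : Fin (s - k), π (j, 0) ≠ (j, 1)}
      = gaussMoment (2 * s) := by
  have e : Fin s × Fin 2 ≃ Fin (2 * s) := finProdFinEquiv.trans (finCongr (by ring))
  have h1 : (∑ k ∈ range (s + 1), s.choose k * hcard (s - k)) = gaussMoment (2 * s) := by
    rw [← card_partition]
    calc Nat.card (FPF (Fin s × Fin 2)) = Nfpf (2 * s) := card_FPF_congr e
      _ = Nat.doubleFactorial (2 * s - 1) := Nfpf_two_mul s
      _ = gaussMoment (2 * s) := by rw [gaussMoment, if_pos (even_two_mul s)]
  exact h1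
end Recurrence
end

section
/- The numbers H_s satisfy the recurrence H_{s+2} = 2(s+1)(H_{s+1} + H_s) for all natural numbers s. -/
open Finset

private def dd (k : ℕ) : ℤ := (gaussMoment (2 * k) : ℤ)

private def ff (j : ℕ) : ℤ := (-1) ^ j * dd j

private lemma dd_succ (k : ℕ) : dd (k + 1) = (2 * (k : ℤ) + 1) * dd k := by
  rcases k with _ | m
  · decide
  · have h1 : 2 * (m + 2) - 1 = (2 * m + 1) + 2 := by omega
    have h2 : 2 * (m + 1) - 1 = 2 * m + 1 := by omega
    simp only [dd, gaussMoment, if_pos (even_two_mul _), h1, h2,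
      Nat.doubleFactorial_add_two]
    push_cast
    ring

private lemma Hs_eq (n : ℕ) :
    Hs n = (-1) ^ n * ∑ j ∈ Finset.range (n + 1), (n.choose j : ℤ) * ff j := by
  unfold Hs
  rw [Finset.mul_sum]
  apply Finset.sum_congr rfl
  intro j hj
  have hj' : j ≤ n := Nat.lt_succ_iff.mp (Finset.mem_range.mp hj)
  have hpow : ((-1 : ℤ)) ^ (n - j) * (-1) ^ j = (-1) ^ n := by
    rw [← pow_add, Nat.sub_add_cancel hj']
  have hsq : ((-1 : ℤ)) ^ j * (-1) ^ j = 1 := by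
    rw [← pow_add, ← two_mul, pow_mul]
    norm_num
  have hkey : ((-1 : ℤ)) ^ (n - j) = (-1) ^ n * (-1) ^ j := by
    calc ((-1 : ℤ)) ^ (n - j) = (-1) ^ (n - j) * ((-1) ^ j * (-1) ^ j) := by rw [hsq, mul_one]
      _ = ((-1) ^ (n - j) * (-1) ^ j) * (-1) ^ j := by ring
      _ = (-1) ^ n * (-1) ^ j := by rw [hpow]
  rw [hkey]
  simp only [ff, dd]
  ring

private lemma pascal_sum (n : ℕ) (f : ℕ → ℤ) :
    ∑ j ∈ Finset.range (n + 2), (((n + 1).choose j : ℕ) : ℤ) * f j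
      = ∑ j ∈ Finset.range (n + 1), ((n.choose j : ℕ) : ℤ) * (f j + f (j + 1)) := by
  rw [Finset.sum_range_succ' (fun j => (((n + 1).choose j : ℕ) : ℤ) * f j) (n + 1)]
  have h2 : ∀ i, (((n + 1).choose (i + 1) : ℕ) : ℤ) = (n.choose i : ℤ) + (n.choose (i + 1) : ℤ) := by
    intro i; exact_mod_cast congrArg (Nat.cast : ℕ → ℤ) (Nat.choose_succ_succ n i)
  have h3 : ∑ i ∈ Finset.range (n + 1), ((n.choose (i + 1) : ℕ) : ℤ) * f (i + 1)
        + ((n.choose 0 : ℕ) : ℤ) * f 0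
      = ∑ j ∈ Finset.range (n + 1), ((n.choose j : ℕ) : ℤ) * f j := by
    rw [← Finset.sum_range_succ' (fun j => ((n.choose j : ℕ) : ℤ) * f j) (n + 1),
      Finset.sum_range_succ]
    simp [Nat.choose_succ_self]
  calc (∑ i ∈ Finset.range (n + 1), (((n + 1).choose (i + 1) : ℕ) : ℤ) * f (i + 1))
        + (((n + 1).choose 0 : ℕ) : ℤ) * f 0
      = (∑ i ∈ Finset.range (n + 1),
          (((n.choose i : ℕ) : ℤ) * f (i + 1) + ((n.choose (i + 1) : ℕ) : ℤ) * f (i + 1)))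
        + ((n.choose 0 : ℕ) : ℤ) * f 0 := by
        simp only [h2, add_mul, Nat.choose_zero_right]
    _ = (∑ i ∈ Finset.range (n + 1), ((n.choose i : ℕ) : ℤ) * f (i + 1))
        + ((∑ i ∈ Finset.range (n + 1), ((n.choose (i + 1) : ℕ) : ℤ) * f (i + 1))
          + ((n.choose 0 : ℕ) : ℤ) * f 0) := by
        rw [Finset.sum_add_distrib]; ring
    _ = (∑ i ∈ Finset.range (n + 1), ((n.choose i : ℕ) : ℤ) * f (i + 1))
        + ∑ j ∈ Finset.range (n + 1), ((n.choose j : ℕ) : ℤ) * f j := by rw [h3]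
    _ = ∑ j ∈ Finset.range (n + 1), ((n.choose j : ℕ) : ℤ) * (f j + f (j + 1)) := by
        rw [← Finset.sum_add_distrib]
        apply Finset.sum_congr rfl
        intro j _; ring

private lemma shift_sum (s : ℕ) (f : ℕ → ℤ) :
    ∑ j ∈ Finset.range (s + 1), ((s : ℤ) - j) * (s.choose j : ℤ) * f (j + 1)
      = ∑ j ∈ Finset.range (s + 1), (j : ℤ) * (s.choose j : ℤ) * f j := by
  rw [Finset.sum_range_succ,
    Finset.sum_range_succ' (fun j => (j : ℤ) * (s.choose j : ℤ) * f j) s]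
  simp only [Nat.cast_zero, zero_mul, add_zero, sub_self]
  apply Finset.sum_congr rfl
  intro i hi
  have hi' : i < s := Finset.mem_range.mp hi
  have key : s.choose (i + 1) * (i + 1) = s.choose i * (s - i) := Nat.choose_succ_right_eq s i
  have key' : ((s : ℤ) - i) * (s.choose i : ℤ) = ((i : ℤ) + 1) * (s.choose (i + 1) : ℤ) := by
    zify [hi'.le] at key
    linarith [key]
  rw [key']
  push_cast
  ring

/-- The recurrence `H_{s+2} = 2(s+1)(H_{s+1} + H_s)`. -/
theorem Hs_recurrence (s : ℕ) :
    Hs (s + 2) = 2 * (s + 1) * (Hs (s + 1) + Hs s) := by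
  have e1 : ∑ j ∈ Finset.range (s + 3), (((s + 2).choose j : ℕ) : ℤ) * ff j
      = ∑ j ∈ Finset.range (s + 2), (((s + 1).choose j : ℕ) : ℤ) * (ff j + ff (j + 1)) :=
    pascal_sum (s + 1) ff
  have e2 : ∑ j ∈ Finset.range (s + 2), (((s + 1).choose j : ℕ) : ℤ) * (ff j + ff (j + 1))
      = ∑ j ∈ Finset.range (s + 1), ((s.choose j : ℕ) : ℤ)
          * ((ff j + ff (j + 1)) + (ff (j + 1) + ff (j + 2))) :=
    pascal_sum s (fun j => ff j + ff (j + 1))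
  have e3 : ∑ j ∈ Finset.range (s + 2), (((s + 1).choose j : ℕ) : ℤ) * ff j
      = ∑ j ∈ Finset.range (s + 1), ((s.choose j : ℕ) : ℤ) * (ff j + ff (j + 1)) :=
    pascal_sum s ff
  have hsh := shift_sum s ff
  -- the key identity
  have key : ∑ j ∈ Finset.range (s + 1), ((s.choose j : ℕ) : ℤ)
        * ((ff j + ff (j + 1)) + (ff (j + 1) + ff (j + 2)))
      = -(2 * ((s : ℤ) + 1)) * ∑ j ∈ Finset.range (s + 1), ((s.choose j : ℕ) : ℤ) * ff (j + 1) := by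
    have hterm : ∀ j ∈ Finset.range (s + 1),
        ((s.choose j : ℕ) : ℤ) * ((ff j + ff (j + 1)) + (ff (j + 1) + ff (j + 2)))
          = -(2 * ((s : ℤ) + 1)) * (((s.choose j : ℕ) : ℤ) * ff (j + 1))
            + (2 * (((s : ℤ) - j) * (s.choose j : ℤ) * ff (j + 1))
              - 2 * ((j : ℤ) * (s.choose j : ℤ) * ff j)) := by
      intro j _
      simp only [ff]
      rw [show j + 2 = (j + 1) + 1 from rfl, dd_succ (j + 1), dd_succ j]
      rw [pow_succ, pow_succ]
      push_cast
      ring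
    rw [Finset.sum_congr rfl hterm, Finset.sum_add_distrib, Finset.sum_sub_distrib,
      ← Finset.mul_sum, ← Finset.mul_sum, ← Finset.mul_sum, hsh]
    ring
  rw [Hs_eq (s + 2), Hs_eq (s + 1), Hs_eq s]
  rw [show s + 2 + 1 = s + 3 from rfl, show s + 1 + 1 = s + 2 from rfl]
  rw [e1, e2, e3, key]
  rw [show (s : ℕ) + 2 = (s + 1) + 1 from rfl, pow_succ, pow_succ]
  have hT : ∑ j ∈ Finset.range (s + 1), ((s.choose j : ℕ) : ℤ) * (ff j + ff (j + 1))
      = (∑ j ∈ Finset.range (s + 1), ((s.choose j : ℕ) : ℤ) * ff j)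
        + ∑ j ∈ Finset.range (s + 1), ((s.choose j : ℕ) : ℤ) * ff (j + 1) := by
    rw [← Finset.sum_add_distrib]
    exact Finset.sum_congr rfl fun j _ => mul_add _ _ _
  rw [hT]
  ring
end

section
/- One has H_1 = 0, and H_{2k+1} > 0 for every integer k ≥ 1. -/
/-- Auxiliary sum `A s = ∑ C(s,j) (−1)^j μ_{2j}`. -/
def Asum (s : ℕ) : ℤ :=
  ∑ j ∈ Finset.range (s + 1),
    (s.choose j : ℤ) * (-1) ^ j * (gaussMoment (2 * j) : ℤ)

/-- Auxiliary sum `B s = ∑ C(s,j) (−1)^j μ_{2j+2}`. -/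
def Bsum (s : ℕ) : ℤ :=
  ∑ j ∈ Finset.range (s + 1),
    (s.choose j : ℤ) * (-1) ^ j * (gaussMoment (2 * j + 2) : ℤ)

lemma gm_succ (j : ℕ) :
    (gaussMoment (2 * j + 2) : ℤ) = (2 * (j : ℤ) + 1) * (gaussMoment (2 * j) : ℤ) := by
  cases j with
  | zero => norm_num [gaussMoment, Nat.doubleFactorial]
  | succ n =>
      have he1 : Even (2 * (n + 1) + 2) := ⟨n + 2, by ring⟩
      have he2 : Even (2 * (n + 1)) := ⟨n + 1, by ring⟩
      simp only [gaussMoment, if_pos he1, if_pos he2]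
      have e1 : 2 * (n + 1) + 2 - 1 = (2 * n + 1) + 2 := by omega
      have e2 : 2 * (n + 1) - 1 = 2 * n + 1 := by omega
      rw [e1, e2, Nat.doubleFactorial_add_two]
      push_cast
      ring

lemma Hs_eq_s4 (s : ℕ) : Hs s = (-1) ^ s * Asum s := by
  rw [Hs, Asum, Finset.mul_sum]
  refine Finset.sum_congr rfl fun j hj => ?_
  have hjs : j ≤ s := by
    have := Finset.mem_range.mp hj; omega
  have h1 : ((-1 : ℤ)) ^ (s - j) * (-1) ^ j = (-1) ^ s := by
    rw [← pow_add, Nat.sub_add_cancel hjs]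
  have h2 : ((-1 : ℤ)) ^ j * (-1) ^ j = 1 := by
    rw [← pow_add, ← two_mul, pow_mul]; norm_num
  have h3 : ((-1 : ℤ)) ^ (s - j) = (-1) ^ s * (-1) ^ j := by
    calc ((-1 : ℤ)) ^ (s - j) = (-1) ^ (s - j) * ((-1) ^ j * (-1) ^ j) := by rw [h2, mul_one]
    _ = ((-1) ^ (s - j) * (-1) ^ j) * (-1) ^ j := by ring
    _ = (-1) ^ s * (-1) ^ j := by rw [h1]
  rw [h3]; ring

lemma Asum_succ (s : ℕ) : Asum (s + 1) = Asum s - Bsum s := by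
  have key : Asum (s + 1)
      = (∑ j ∈ Finset.range (s + 1),
          ((s.choose j : ℤ) * (-1) ^ (j + 1) * (gaussMoment (2 * j + 2) : ℤ)
            + (s.choose (j + 1) : ℤ) * (-1) ^ (j + 1) * (gaussMoment (2 * j + 2) : ℤ))) + 1 := by
    rw [Asum, Finset.sum_range_succ']
    have h0 : (((s + 1).choose 0 : ℤ) * (-1) ^ 0 * (gaussMoment (2 * 0) : ℤ)) = 1 := by
      norm_num [gaussMoment, Nat.doubleFactorial]
    rw [h0]
    congr 1
    refine Finset.sum_congr rfl fun j hj => ?_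
    rw [Nat.choose_succ_succ]
    have h2j : 2 * (j + 1) = 2 * j + 2 := by ring
    rw [h2j]
    push_cast
    ring
  rw [key, Finset.sum_add_distrib]
  have hB : (∑ j ∈ Finset.range (s + 1),
      (s.choose j : ℤ) * (-1) ^ (j + 1) * (gaussMoment (2 * j + 2) : ℤ)) = -Bsum s := by
    rw [Bsum, ← Finset.sum_neg_distrib]
    refine Finset.sum_congr rfl fun j hj => ?_
    rw [pow_succ]
    ring
  have hA : (∑ j ∈ Finset.range (s + 1),
      (s.choose (j + 1) : ℤ) * (-1) ^ (j + 1) * (gaussMoment (2 * j + 2) : ℤ)) = Asum s - 1 := by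
    rw [Finset.sum_range_succ, Nat.choose_succ_self]
    simp only [Nat.cast_zero, zero_mul, add_zero]
    rw [Asum, Finset.sum_range_succ']
    have hg0 : (gaussMoment (2 * 0) : ℤ) = 1 := by norm_num [gaussMoment, Nat.doubleFactorial]
    rw [hg0]
    simp only [Nat.choose_zero_right, Nat.cast_one, pow_zero, one_mul, mul_one]
    rw [add_sub_cancel_right]
    refine Finset.sum_congr rfl fun j hj => ?_
    have h2j : 2 * (j + 1) = 2 * j + 2 := by ring
    rw [h2j]
  rw [hB, hA]
  ring

lemma Bsum_succ (s : ℕ) : Bsum (s + 1) = Asum (s + 1) - 2 * ((s : ℤ) + 1) * Bsum s := by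
  have key : Bsum (s + 1)
      = Asum (s + 1) + 2 * ∑ j ∈ Finset.range (s + 2),
          (j : ℤ) * ((s + 1).choose j : ℤ) * (-1) ^ j * (gaussMoment (2 * j) : ℤ) := by
    rw [Bsum, Asum, Finset.mul_sum, ← Finset.sum_add_distrib]
    refine Finset.sum_congr rfl fun j hj => ?_
    rw [gm_succ]
    ring
  have hS : (∑ j ∈ Finset.range (s + 2),
      (j : ℤ) * ((s + 1).choose j : ℤ) * (-1) ^ j * (gaussMoment (2 * j) : ℤ))
      = -((s : ℤ) + 1) * Bsum s := by
    rw [Finset.sum_range_succ']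
    simp only [Nat.cast_zero, zero_mul, add_zero]
    rw [Bsum, Finset.mul_sum]
    refine Finset.sum_congr rfl fun j hj => ?_
    have hc' : ((s : ℤ) + 1) * (s.choose j : ℤ) = ((s + 1).choose (j + 1) : ℤ) * ((j : ℤ) + 1) := by
      exact_mod_cast congrArg (Nat.cast : ℕ → ℤ) (Nat.add_one_mul_choose_eq s j)
    have h2j : 2 * (j + 1) = 2 * j + 2 := by ring
    rw [h2j]
    push_cast
    linear_combination ((-1 : ℤ) ^ j * (gaussMoment (2 * j + 2) : ℤ)) * hc'
  rw [key, hS]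
  ring

lemma Hs_rec (s : ℕ) : Hs (s + 2) = 2 * ((s : ℤ) + 1) * (Hs (s + 1) + Hs s) := by
  have h1 : Asum (s + 2) = 2 * ((s : ℤ) + 1) * Bsum s := by
    have e : s + 2 = (s + 1) + 1 := rfl
    rw [e, Asum_succ (s + 1), Bsum_succ s]
    ring
  have hB : Bsum s = Asum s - Asum (s + 1) := by
    have := Asum_succ s; linarith
  rw [Hs_eq_s4 (s + 2), Hs_eq_s4 (s + 1), Hs_eq_s4 s, h1, hB]
  ring

lemma Hs_aux : ∀ n : ℕ, 0 ≤ Hs n ∧ 0 ≤ Hs (n + 1) ∧ 0 < Hs (n + 1) + Hs n := by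
  have h0 : Hs 0 = 1 := by norm_num [Hs, gaussMoment, Nat.doubleFactorial]
  have h1 : Hs 1 = 0 := by
    norm_num [Hs, Finset.sum_range_succ, gaussMoment, Nat.doubleFactorial]
  intro n
  induction n with
  | zero => rw [h0, h1]; norm_num
  | succ m ih =>
      obtain ⟨ha, hb, hc⟩ := ih
      have hrec := Hs_rec m
      have hpos : 0 < Hs (m + 2) := by
        rw [hrec]
        have : (0 : ℤ) < 2 * ((m : ℤ) + 1) := by positivity
        exact mul_pos this hc
      exact ⟨hb, le_of_lt hpos, by linarith⟩

/-- `H_1 = 0` and `H_{2k+1} > 0` for every integer `k ≥ 1`. -/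
theorem Hs_one_eq_zero_and_Hs_odd_pos :
    Hs 1 = 0 ∧ ∀ k : ℕ, 1 ≤ k → 0 < Hs (2 * k + 1) := by
  constructor
  · norm_num [Hs, Finset.sum_range_succ, gaussMoment, Nat.doubleFactorial]
  · intro k hk
    obtain ⟨m, hm⟩ : ∃ m, 2 * k + 1 = m + 2 := ⟨2 * k - 1, by omega⟩
    rw [hm, Hs_rec m]
    have hc := (Hs_aux m).2.2
    have : (0 : ℤ) < 2 * ((m : ℤ) + 1) := by positivity
    exact mul_pos this hc
end

section
/- As s → ∞ one has H_s = (e^{−1/2} + o(1)) μ_{2s}; that is, the ratio H_s / μ_{2s} converges to e^{−1/2}. -/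
/-!
Reindexing by `k = s - j`, `H_s / μ_{2s} = ∑_k (-1)^k C(s,k) μ_{2(s-k)} / μ_{2s}`, and
`C(s,k) μ_{2(s-k)} / μ_{2s} = (1/k!) ∏_{i<k} (s-i)/(2(s-i)-1)`. For fixed `k` the product tends
to `2^{-k}`, and it always lies in `[0,1]`, so by dominated convergence (Tannery's theorem) the
sum tends to `∑_k (-1/2)^k / k! = e^{-1/2}`.
-/

open Filter Finset Topology
open scoped Nat

lemma gaussMoment_two_mul_pos (m : ℕ) : 0 < gaussMoment (2 * m) := by
  simpa [gaussMoment] using Nat.doubleFactorial_pos _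

lemma gaussMoment_two_mul_succ (m : ℕ) :
    gaussMoment (2 * (m + 1)) = (2 * m + 1) * gaussMoment (2 * m) := by
  simp only [gaussMoment, even_two_mul, if_true]
  rw [show 2 * (m + 1) - 1 = 2 * m + 1 by omega, Nat.doubleFactorial_add_one]

lemma gaussMoment_two_mul_eq_mul_prod {s k : ℕ} (h : k ≤ s) :
    gaussMoment (2 * s) = gaussMoment (2 * (s - k)) * ∏ i ∈ range k, (2 * (s - i) - 1) := by
  induction k with
  | zero => simp
  | succ k ih =>
    rw [ih (by omega), prod_range_succ, show 2 * (s - k) - 1 = 2 * (s - (k + 1)) + 1 by omega,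
      show s - k = s - (k + 1) + 1 by omega, gaussMoment_two_mul_succ]
    ring

lemma natCast_div_two_mul_sub_one_mem_Icc (n : ℕ) :
    (n : ℝ) / (2 * n - 1) ∈ Set.Icc (0 : ℝ) 1 := by
  rcases Nat.eq_zero_or_pos n with rfl | hn
  · simp
  have hn' : (1 : ℝ) ≤ n := by exact_mod_cast hn
  exact ⟨div_nonneg (by positivity) (by linarith), div_le_one_of_le₀ (by linarith) (by linarith)⟩

lemma tendsto_natCast_div_two_mul_sub_one :
    Tendsto (fun n : ℕ => (n : ℝ) / (2 * n - 1)) atTop (𝓝 (1 / 2)) := by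
  have h : Tendsto (fun n : ℕ => (2 - 1 / (n : ℝ))⁻¹) atTop (𝓝 (2 - 0)⁻¹) :=
    ((tendsto_const_nhds.sub tendsto_one_div_atTop_nhds_zero_nat).inv₀ (by norm_num))
  rw [sub_zero, ← one_div] at h
  refine h.congr' ?_
  filter_upwards [eventually_ge_atTop 1] with n hn
  have hn' : (1 : ℝ) ≤ n := by exact_mod_cast hn
  field_simp

noncomputable def gaussMomentRatio (s k : ℕ) : ℝ :=
  ∏ i ∈ range k, ((s - i : ℕ) : ℝ) / (2 * (s - i : ℕ) - 1)

lemma gaussMomentRatio_nonneg (s k : ℕ) : 0 ≤ gaussMomentRatio s k :=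
  prod_nonneg fun i _ => (natCast_div_two_mul_sub_one_mem_Icc (s - i)).1

lemma gaussMomentRatio_le_one (s k : ℕ) : gaussMomentRatio s k ≤ 1 :=
  prod_le_one (fun i _ => (natCast_div_two_mul_sub_one_mem_Icc (s - i)).1)
    fun i _ => (natCast_div_two_mul_sub_one_mem_Icc (s - i)).2

lemma gaussMomentRatio_eq_zero {s k : ℕ} (h : s < k) : gaussMomentRatio s k = 0 :=
  prod_eq_zero (mem_range.2 h) (by simp)

lemma tendsto_gaussMomentRatio (k : ℕ) :
    Tendsto (gaussMomentRatio · k) atTop (𝓝 ((1 / 2) ^ k)) := by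
  have h := tendsto_finsetProd (range k) fun i _ =>
    tendsto_natCast_div_two_mul_sub_one.comp (tendsto_sub_atTop_nat i)
  simpa only [gaussMomentRatio, Function.comp_def, prod_const, card_range] using h

lemma choose_mul_gaussMoment_div {s k : ℕ} (h : k ≤ s) :
    (s.choose k : ℝ) * gaussMoment (2 * (s - k)) / gaussMoment (2 * s) =
      gaussMomentRatio s k / k ! := by
  have hdesc : (s.choose k : ℝ) * k ! = ∏ i ∈ range k, ((s - i : ℕ) : ℝ) := by
    have : s.choose k * k ! = ∏ i ∈ range k, (s - i) := by
      rw [← Nat.descFactorial_eq_prod_range, Nat.descFactorial_eq_factorial_mul_choose, mul_comm]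
    exact_mod_cast this
  have hodd : ((∏ i ∈ range k, (2 * (s - i) - 1) : ℕ) : ℝ) =
      ∏ i ∈ range k, (2 * ((s - i : ℕ) : ℝ) - 1) := by
    push_cast
    refine prod_congr rfl fun i hi => ?_
    have : 1 ≤ 2 * (s - i) := by have := mem_range.1 hi; omega
    push_cast [this]
    ring
  have hpos : 0 < ∏ i ∈ range k, (2 * ((s - i : ℕ) : ℝ) - 1) := by
    rw [← hodd]
    exact_mod_cast prod_pos fun i hi => by have := mem_range.1 hi; omega
  have hG : (0 : ℝ) < gaussMoment (2 * (s - k)) := by exact_mod_cast gaussMoment_two_mul_pos _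
  rw [gaussMomentRatio, prod_div_distrib, ← hdesc, gaussMoment_two_mul_eq_mul_prod h,
    Nat.cast_mul, hodd]
  field_simp

lemma Hs_eq_sum_reflect (s : ℕ) :
    Hs s = ∑ k ∈ range (s + 1), (-1) ^ k * (s.choose k : ℤ) * gaussMoment (2 * (s - k)) := by
  rw [Hs, ← sum_range_reflect]
  refine sum_congr rfl fun k hk => ?_
  have hks : k ≤ s := Nat.lt_succ_iff.1 (mem_range.1 hk)
  rw [show s + 1 - 1 - k = s - k by omega, Nat.choose_symm hks, Nat.sub_sub_self hks]
  ring

lemma Hs_div_gaussMoment_eq_tsum (s : ℕ) :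
    (Hs s : ℝ) / gaussMoment (2 * s) = ∑' k, (-1) ^ k * gaussMomentRatio s k / k ! := by
  rw [tsum_eq_sum (s := range (s + 1)) fun k hk => by
    rw [gaussMomentRatio_eq_zero (by simpa using hk), mul_zero, zero_div]]
  rw [Hs_eq_sum_reflect, Int.cast_sum, sum_div]
  refine sum_congr rfl fun k hk => ?_
  rw [mul_div_assoc, ← choose_mul_gaussMoment_div (Nat.lt_succ_iff.1 (mem_range.1 hk))]
  push_cast
  ring

/-- As `s → ∞`, `H_s = (e^{−1/2} + o(1)) μ_{2s}`: the ratio `H_s / μ_{2s}`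
converges to `e^{−1/2}`. -/
theorem Hs_div_gaussMoment_tendsto :
    Filter.Tendsto (fun s : ℕ => (Hs s : ℝ) / (gaussMoment (2 * s) : ℝ))
      Filter.atTop (nhds (Real.exp (-(1 / 2)))) := by
  have hlim (k : ℕ) : Tendsto (fun s => (-1) ^ k * gaussMomentRatio s k / k !) atTop
      (𝓝 ((-(1 / 2)) ^ k / k !)) := by
    have h := ((tendsto_gaussMomentRatio k).const_mul ((-1) ^ k)).div_const (k ! : ℝ)
    rwa [← mul_pow, neg_one_mul] at h
  have hbound (s k : ℕ) : ‖(-1) ^ k * gaussMomentRatio s k / (k ! : ℝ)‖ ≤ 1 / k ! := by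
    rw [norm_div, norm_mul, norm_pow, norm_neg, norm_one, one_pow, one_mul,
      Real.norm_of_nonneg (gaussMomentRatio_nonneg s k), Real.norm_natCast]
    gcongr
    exact gaussMomentRatio_le_one s k
  have hsummable : Summable fun k : ℕ => 1 / (k ! : ℝ) := by
    simpa using Real.summable_pow_div_factorial 1
  rw [Real.exp_eq_exp_ℝ, NormedSpace.exp_eq_tsum_div]
  simpa only [Hs_div_gaussMoment_eq_tsum] using
    tendsto_tsum_of_dominated_convergence hsummable hlim (.of_forall hbound)
end

section
/- Let G be a finite Frobenius group with kernel N and complement H. Then the number of irreducible complex characters of G (equivalently, the number of conjugacy classes of G) equals |Irr(H)| + (|Irr(N)| − 1)/|H|, i.e. the number of conjugacy classes of H plus (number of conjugacy classes of N minus 1) divided by |H|. -/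
open Function

section FrobHelpers

variable {G : Type*} [Group G] [Fintype G] {N H : Subgroup G}

lemma frob_inf_triv (hNH : N ⊓ H = ⊥) {x : G} (hxN : x ∈ N) (hxH : x ∈ H) : x = 1 := by
  have : x ∈ N ⊓ H := ⟨hxN, hxH⟩
  rw [hNH, Subgroup.mem_bot] at this
  exact this

/-- Any coset element `m * h` (with `h ≠ 1`) is an `N`-conjugate of `h`. -/
lemma frob_conj_coset (hNorm : N.Normal)
    (hfree : ∀ h ∈ H, h ≠ 1 → ∀ n ∈ N, n ≠ 1 → h * n * h⁻¹ ≠ n)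
    {h : G} (hh : h ∈ H) (hne : h ≠ 1) {m : G} (hm : m ∈ N) :
    ∃ x ∈ N, x * h * x⁻¹ = m * h := by
  have hmem : ∀ x : G, x ∈ N → x * h * x⁻¹ * h⁻¹ ∈ N := by
    intro x hx
    have h1 : h * x⁻¹ * h⁻¹ ∈ N := hNorm.conj_mem _ (N.inv_mem hx) h
    have : x * (h * x⁻¹ * h⁻¹) ∈ N := N.mul_mem hx h1
    simpa [mul_assoc] using this
  let f : N → N := fun x => ⟨(x : G) * h * (x : G)⁻¹ * h⁻¹, hmem x x.2⟩
  have hinj : Injective f := by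
    rintro ⟨x₁, hx₁⟩ ⟨x₂, hx₂⟩ hf
    have heq : x₁ * h * x₁⁻¹ * h⁻¹ = x₂ * h * x₂⁻¹ * h⁻¹ := congrArg Subtype.val hf
    have heq2 : x₁ * h * x₁⁻¹ = x₂ * h * x₂⁻¹ := by
      have := congrArg (· * h) heq
      simpa [mul_assoc] using this
    have hmN : x₂⁻¹ * x₁ ∈ N := N.mul_mem (N.inv_mem hx₂) hx₁
    have h4 : x₂⁻¹ * x₁ * h = h * (x₂⁻¹ * x₁) := by
      calc x₂⁻¹ * x₁ * h = x₂⁻¹ * (x₁ * h * x₁⁻¹) * x₁ := by group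
        _ = x₂⁻¹ * (x₂ * h * x₂⁻¹) * x₁ := by rw [heq2]
        _ = h * (x₂⁻¹ * x₁) := by group
    have hcomm : h * (x₂⁻¹ * x₁) * h⁻¹ = x₂⁻¹ * x₁ := by
      rw [← h4]; group
    have hm1 : x₂⁻¹ * x₁ = 1 := by
      by_contra hne1
      exact hfree h hh hne _ hmN hne1 hcomm
    have : x₂ = x₁ := by rwa [inv_mul_eq_one] at hm1
    exact Subtype.ext this.symm
  obtain ⟨x, hx⟩ := Finite.surjective_of_injective hinj ⟨m, hm⟩
  refine ⟨x, x.2, ?_⟩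
  have : (x : G) * h * (x : G)⁻¹ * h⁻¹ = m := congrArg Subtype.val hx
  have := congrArg (· * h) this
  simpa [mul_assoc] using this

/-- Every element outside `N` is an `N`-conjugate of a nontrivial element of `H`. -/
lemma frob_conj_to_H (hNorm : N.Normal)
    (hdecomp : ∀ g : G, ∃ n ∈ N, ∃ h ∈ H, g = n * h)
    (hfree : ∀ h ∈ H, h ≠ 1 → ∀ n ∈ N, n ≠ 1 → h * n * h⁻¹ ≠ n)
    {g : G} (hg : g ∉ N) :
    ∃ x ∈ N, ∃ h ∈ H, h ≠ 1 ∧ x * h * x⁻¹ = g := by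
  obtain ⟨m, hm, h, hh, rfl⟩ := hdecomp g
  have hne : h ≠ 1 := by
    rintro rfl
    exact hg (by simpa using hm)
  obtain ⟨x, hxN, hx⟩ := frob_conj_coset hNorm hfree hh hne hm
  exact ⟨x, hxN, h, hh, hne, hx⟩

/-- The centralizer of a nontrivial element of `N` is contained in `N`. -/
lemma frob_centralizer (hNorm : N.Normal)
    (hdecomp : ∀ g : G, ∃ n ∈ N, ∃ h ∈ H, g = n * h)
    (hfree : ∀ h ∈ H, h ≠ 1 → ∀ n ∈ N, n ≠ 1 → h * n * h⁻¹ ≠ n)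
    {n : G} (hn : n ∈ N) (hne : n ≠ 1) {g : G} (hg : g * n * g⁻¹ = n) : g ∈ N := by
  by_contra hgN
  obtain ⟨x, hxN, h, hh, hne1, rfl⟩ := frob_conj_to_H hNorm hdecomp hfree hgN
  have hmem : x⁻¹ * n * x ∈ N := by
    have := hNorm.conj_mem _ hn x⁻¹
    simpa using this
  have hnen : x⁻¹ * n * x ≠ 1 := by
    intro hcon
    apply hne
    have := congrArg (fun y => x * y * x⁻¹) hcon
    simpa [mul_assoc] using this
  apply hfree h hh hne1 _ hmem hnen
  calc h * (x⁻¹ * n * x) * h⁻¹ = x⁻¹ * ((x * h * x⁻¹) * n * (x * h * x⁻¹)⁻¹) * x := by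
        group
    _ = x⁻¹ * n * x := by rw [hg]

/-- Freeness: if a conjugate `h n h⁻¹` is `N`-conjugate back to `n ≠ 1`, then `h = 1`. -/
lemma frob_free_classes (hNorm : N.Normal) (hNH : N ⊓ H = ⊥)
    (hdecomp : ∀ g : G, ∃ n ∈ N, ∃ h ∈ H, g = n * h)
    (hfree : ∀ h ∈ H, h ≠ 1 → ∀ n ∈ N, n ≠ 1 → h * n * h⁻¹ ≠ n)
    {h : G} (hh : h ∈ H) {n : G} (hn : n ∈ N) (hne : n ≠ 1)
    {m : G} (hm : m ∈ N) (heq : m * (h * n * h⁻¹) * m⁻¹ = n) : h = 1 := by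
  have hc : (m * h) * n * (m * h)⁻¹ = n := by
    rw [mul_inv_rev, show m * h * n * (h⁻¹ * m⁻¹) = m * (h * n * h⁻¹) * m⁻¹ by group]
    exact heq
  have hmhN : m * h ∈ N := frob_centralizer hNorm hdecomp hfree hn hne hc
  have hhN : h ∈ N := by
    have := N.mul_mem (N.inv_mem hm) hmhN
    simpa [mul_assoc] using this
  exact frob_inf_triv hNH hhN hh

/-- Fusion in `H`: `G`-conjugate elements of `H` are `H`-conjugate. -/
lemma frob_fusion_H (hNorm : N.Normal) (hNH : N ⊓ H = ⊥)
    (hdecomp : ∀ g : G, ∃ n ∈ N, ∃ h ∈ H, g = n * h)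
    {h₁ h₂ : G} (hh₁ : h₁ ∈ H) (hh₂ : h₂ ∈ H) {g : G} (hg : g * h₁ * g⁻¹ = h₂) :
    ∃ k ∈ H, k * h₁ * k⁻¹ = h₂ := by
  obtain ⟨m, hm, k, hk, rfl⟩ := hdecomp g
  refine ⟨k, hk, ?_⟩
  set h' := k * h₁ * k⁻¹ with hh'
  have hh'H : h' ∈ H := by
    exact H.mul_mem (H.mul_mem hk hh₁) (H.inv_mem hk)
  have heq : m * h' * m⁻¹ = h₂ := by
    rw [hh', show m * (k * h₁ * k⁻¹) * m⁻¹ = (m * k) * h₁ * (m * k)⁻¹ by group]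
    exact hg
  have hNmem : h₂ * h'⁻¹ ∈ N := by
    have h5 : h' * m⁻¹ * h'⁻¹ ∈ N := hNorm.conj_mem _ (N.inv_mem hm) h'
    have h6 : m * (h' * m⁻¹ * h'⁻¹) ∈ N := N.mul_mem hm h5
    have h7 : h₂ * h'⁻¹ = m * (h' * m⁻¹ * h'⁻¹) := by rw [← heq]; group
    rwa [h7]
  have hHmem : h₂ * h'⁻¹ ∈ H := H.mul_mem hh₂ (H.inv_mem hh'H)
  have := frob_inf_triv hNH hNmem hHmem
  rw [mul_inv_eq_one] at this
  exact this.symm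

lemma myCardSplit {α : Type*} [Finite α] (q : α → Prop) :
    Nat.card α = Nat.card {a // q a} + Nat.card {a // ¬ q a} := by
  classical
  rw [← Nat.card_sum]
  exact Nat.card_congr (Equiv.sumCompl q).symm

lemma myCardFibers {α β : Type*} [Finite α] (f : α → β) (hf : Surjective f) (k : ℕ)
    (h : ∀ b, Nat.card {a // f a = b} = k) : Nat.card α = k * Nat.card β := by
  have hβ : Finite β := Finite.of_surjective f hf
  classical
  have fα := Fintype.ofFinite α
  have fβ := Fintype.ofFinite β
  calc Nat.card α = Nat.card (Σ b, {a // f a = b}) :=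
        Nat.card_congr (Equiv.sigmaFiberEquiv f).symm
    _ = ∑ b : β, Fintype.card {a // f a = b} := by
        rw [Nat.card_eq_fintype_card, Fintype.card_sigma]
    _ = ∑ _b : β, k := by
        refine Finset.sum_congr rfl fun b _ => ?_
        rw [← Nat.card_eq_fintype_card, h]
    _ = k * Nat.card β := by
        rw [Finset.sum_const, Finset.card_univ, smul_eq_mul, Nat.card_eq_fintype_card, mul_comm]

end FrobHelpers

lemma conj_mk_eq_one {α : Type*} [Group α] {a : α} : ConjClasses.mk a = 1 ↔ a = 1 := by
  rw [ConjClasses.one_eq_mk_one, ConjClasses.mk_eq_mk_iff_isConj, isConj_one_left]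

/-- `G` is a Frobenius group with kernel `N` and complement `H`: `N` is a
nontrivial normal subgroup, `H` is a subgroup different from `{1}` and `G`,
`N ⊓ H = {1}`, `G = NH`, and conjugation by any `h ∈ H ∖ {1}` has no fixed point
on `N ∖ {1}`. -/
def IsFrobenius {G : Type*} [Group G] (N H : Subgroup G) : Prop :=
  N.Normal ∧ N ≠ ⊥ ∧ H ≠ ⊥ ∧ H ≠ ⊤ ∧ N ⊓ H = ⊥ ∧
    (∀ g : G, ∃ n ∈ N, ∃ h ∈ H, g = n * h) ∧
    ∀ h ∈ H, h ≠ 1 → ∀ n ∈ N, n ≠ 1 → h * n * h⁻¹ ≠ n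

/-- For a finite Frobenius group `G` with kernel `N` and complement `H`, the
number of conjugacy classes of `G` (equivalently, of irreducible complex
characters of `G`) equals `|Irr(H)| + (|Irr(N)| − 1)/|H|`, i.e. the number of
conjugacy classes of `H` plus (the number of conjugacy classes of `N` minus 1)
divided by `|H|`. -/
theorem frobenius_card_conjClasses {G : Type*} [Group G] [Fintype G]
    (N H : Subgroup G) (hF : IsFrobenius N H) :
    Nat.card (ConjClasses G) =
      Nat.card (ConjClasses ↥H) +
        (Nat.card (ConjClasses ↥N) - 1) / Nat.card ↥H := by
  obtain ⟨hNorm, -, -, -, hNH, hdecomp, hfree⟩ := hF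
  classical
  set p : ConjClasses G → Prop := fun c => ∃ g ∈ N, ConjClasses.mk g = c with hpdef
  have memN_of_mk : ∀ {g g' : G}, g ∈ N → ConjClasses.mk g = ConjClasses.mk g' → g' ∈ N := by
    intro g g' hg h
    rw [ConjClasses.mk_eq_mk_iff_isConj, isConj_iff] at h
    obtain ⟨c, rfl⟩ := h
    exact hNorm.conj_mem _ hg c
  -- ### Step B : classes outside `N` ↔ nontrivial classes of `H`
  have hFnotp : ∀ d : ConjClasses ↥H, d ≠ 1 → ¬ p (ConjClasses.map H.subtype d) := by
    intro d hd hpc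
    obtain ⟨h, rfl⟩ := ConjClasses.exists_rep d
    obtain ⟨g, hgN, hgmk⟩ := hpc
    have hhn : (h : G) ∈ N := memN_of_mk hgN hgmk
    have h1 : (h : G) = 1 := frob_inf_triv hNH hhn h.2
    apply hd
    have : h = 1 := by exact_mod_cast h1
    rw [this]
    exact ConjClasses.one_eq_mk_one.symm
  let F : {d : ConjClasses ↥H // d ≠ 1} → {c : ConjClasses G // ¬ p c} :=
    fun d => ⟨ConjClasses.map H.subtype d.1, hFnotp d.1 d.2⟩
  have hFinj : Injective F := by
    rintro ⟨d₁, hd₁⟩ ⟨d₂, hd₂⟩ h12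
    obtain ⟨h₁, rfl⟩ := ConjClasses.exists_rep d₁
    obtain ⟨h₂, rfl⟩ := ConjClasses.exists_rep d₂
    have hmk : ConjClasses.mk (h₁ : G) = ConjClasses.mk (h₂ : G) := congrArg Subtype.val h12
    rw [ConjClasses.mk_eq_mk_iff_isConj, isConj_iff] at hmk
    obtain ⟨g, hg⟩ := hmk
    obtain ⟨k, hkH, hk⟩ := frob_fusion_H hNorm hNH hdecomp h₁.2 h₂.2 hg
    have : IsConj h₁ h₂ := by
      rw [isConj_iff]
      exact ⟨⟨k, hkH⟩, by ext; push_cast; exact hk⟩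
    exact Subtype.ext (ConjClasses.mk_eq_mk_iff_isConj.2 this)
  have hFsurj : Surjective F := by
    rintro ⟨c, hc⟩
    obtain ⟨g, rfl⟩ := ConjClasses.exists_rep c
    have hgN : g ∉ N := fun hg => hc ⟨g, hg, rfl⟩
    obtain ⟨x, hxN, h, hhH, hne, hx⟩ := frob_conj_to_H hNorm hdecomp hfree hgN
    refine ⟨⟨ConjClasses.mk (⟨h, hhH⟩ : ↥H), ?_⟩, ?_⟩
    · intro h1
      have : (⟨h, hhH⟩ : ↥H) = 1 := conj_mk_eq_one.mp h1
      exact hne (by simpa using Subtype.ext_iff.mp this)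
    · apply Subtype.ext
      show ConjClasses.mk (h : G) = ConjClasses.mk g
      rw [ConjClasses.mk_eq_mk_iff_isConj, isConj_iff]
      exact ⟨x, hx⟩
  have hB : Nat.card {c : ConjClasses G // ¬ p c}
      = Nat.card {d : ConjClasses ↥H // d ≠ 1} :=
    (Nat.card_eq_of_bijective F ⟨hFinj, hFsurj⟩).symm
  -- ### Step A : classes inside `N`
  have hmapP : ∀ d : ConjClasses ↥N, p (ConjClasses.map N.subtype d) := by
    intro d
    obtain ⟨n, rfl⟩ := ConjClasses.exists_rep d
    exact ⟨↑n, n.2, rfl⟩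
  have hmapne : ∀ d : ConjClasses ↥N, d ≠ 1 → ConjClasses.map N.subtype d ≠ 1 := by
    intro d hd
    obtain ⟨n, rfl⟩ := ConjClasses.exists_rep d
    intro h1
    have h2 : (n : G) = 1 := conj_mk_eq_one.mp h1
    apply hd
    have : n = 1 := by exact_mod_cast h2
    rw [this]
    exact ConjClasses.one_eq_mk_one.symm
  let T := {x : {c : ConjClasses G // p c} // x.1 ≠ 1}
  let S := {d : ConjClasses ↥N // d ≠ 1}
  let Ψ : S → T := fun d => ⟨⟨ConjClasses.map N.subtype d.1, hmapP d.1⟩, hmapne d.1 d.2⟩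
  have hΨsurj : Surjective Ψ := by
    rintro ⟨⟨c, hcp⟩, hcne⟩
    obtain ⟨g, rfl⟩ := ConjClasses.exists_rep c
    have hgN : g ∈ N := by
      obtain ⟨g₀, hg₀, hmk⟩ := hcp
      exact memN_of_mk hg₀ hmk
    have hgne : g ≠ 1 := by
      intro h1
      apply hcne
      show ConjClasses.mk g = 1
      rw [h1]
      exact ConjClasses.one_eq_mk_one.symm
    refine ⟨⟨ConjClasses.mk (⟨g, hgN⟩ : ↥N), ?_⟩, ?_⟩
    · intro h1
      have : (⟨g, hgN⟩ : ↥N) = 1 := conj_mk_eq_one.mp h1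
      exact hgne (by simpa using Subtype.ext_iff.mp this)
    · apply Subtype.ext
      apply Subtype.ext
      rfl
  have hfib : ∀ x : T, Nat.card {d : S // Ψ d = x} = Nat.card ↥H := by
    rintro ⟨⟨c, hcp⟩, hcne⟩
    obtain ⟨g, rfl⟩ := ConjClasses.exists_rep c
    have hgN : g ∈ N := by
      obtain ⟨g₀, hg₀, hmk⟩ := hcp
      exact memN_of_mk hg₀ hmk
    have hgne : g ≠ 1 := by
      intro h1
      apply hcne
      show ConjClasses.mk g = 1
      rw [h1]
      exact ConjClasses.one_eq_mk_one.symm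
    -- the map from `H` to the fiber
    have hconjmem : ∀ h : ↥H, (h : G) * g * (h : G)⁻¹ ∈ N := fun h =>
      hNorm.conj_mem g hgN (h : G)
    have hmkne : ∀ h : ↥H,
        ConjClasses.mk (⟨(h : G) * g * (h : G)⁻¹, hconjmem h⟩ : ↥N) ≠ 1 := by
      intro h h1
      have h2 : (h : G) * g * (h : G)⁻¹ = 1 := by
        have := conj_mk_eq_one.mp h1
        simpa using Subtype.ext_iff.mp this
      apply hgne
      have := congrArg (fun y => (h : G)⁻¹ * y * (h : G)) h2
      simpa [mul_assoc] using this
    have hfibval : ∀ h : ↥H,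
        Ψ ⟨ConjClasses.mk (⟨(h : G) * g * (h : G)⁻¹, hconjmem h⟩ : ↥N), hmkne h⟩
          = ⟨⟨ConjClasses.mk g, hcp⟩, hcne⟩ := by
      intro h
      apply Subtype.ext
      apply Subtype.ext
      show ConjClasses.mk ((h : G) * g * (h : G)⁻¹) = ConjClasses.mk g
      rw [ConjClasses.mk_eq_mk_iff_isConj, isConj_iff]
      exact ⟨(h : G)⁻¹, by group⟩
    let e : ↥H → {d : S // Ψ d = ⟨⟨ConjClasses.mk g, hcp⟩, hcne⟩} := fun h =>
      ⟨⟨ConjClasses.mk (⟨(h : G) * g * (h : G)⁻¹, hconjmem h⟩ : ↥N), hmkne h⟩, hfibval h⟩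
    have heinj : Injective e := by
      intro h₁ h₂ he
      have hmk : ConjClasses.mk (⟨(h₁ : G) * g * (h₁ : G)⁻¹, hconjmem h₁⟩ : ↥N)
          = ConjClasses.mk (⟨(h₂ : G) * g * (h₂ : G)⁻¹, hconjmem h₂⟩ : ↥N) :=
        congrArg (fun z => z.1.1) he
      rw [ConjClasses.mk_eq_mk_iff_isConj, isConj_iff] at hmk
      obtain ⟨m, hm⟩ := hmk
      have hmG : (m : G) * ((h₁ : G) * g * (h₁ : G)⁻¹) * (m : G)⁻¹
          = (h₂ : G) * g * (h₂ : G)⁻¹ := by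
        simpa using Subtype.ext_iff.mp hm
      set y := (h₂ : G)⁻¹ * (m : G) * (h₁ : G) with hy
      have hyc : y * g * y⁻¹ = g := by
        calc y * g * y⁻¹
            = (h₂ : G)⁻¹ * ((m : G) * ((h₁ : G) * g * (h₁ : G)⁻¹) * (m : G)⁻¹) * (h₂ : G) := by
              rw [hy]; group
          _ = (h₂ : G)⁻¹ * ((h₂ : G) * g * (h₂ : G)⁻¹) * (h₂ : G) := by rw [hmG]
          _ = g := by group
      have hyN : y ∈ N := frob_centralizer hNorm hdecomp hfree hgN hgne hyc
      have hconjN : (h₂ : G)⁻¹ * (m : G) * (h₂ : G) ∈ N := by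
        have := hNorm.conj_mem _ m.2 ((h₂ : G)⁻¹)
        simpa using this
      have hhh : (h₂ : G)⁻¹ * (h₁ : G) ∈ N := by
        have : ((h₂ : G)⁻¹ * (m : G) * (h₂ : G))⁻¹ * y ∈ N :=
          N.mul_mem (N.inv_mem hconjN) hyN
        have heq : ((h₂ : G)⁻¹ * (m : G) * (h₂ : G))⁻¹ * y = (h₂ : G)⁻¹ * (h₁ : G) := by
          rw [hy]; group
        rwa [heq] at this
      have hhhH : (h₂ : G)⁻¹ * (h₁ : G) ∈ H := H.mul_mem (H.inv_mem h₂.2) h₁.2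
      have h1 : (h₂ : G)⁻¹ * (h₁ : G) = 1 := frob_inf_triv hNH hhh hhhH
      rw [inv_mul_eq_one] at h1
      exact Subtype.ext h1.symm
    have hesurj : Surjective e := by
      rintro ⟨⟨d, hdne⟩, hΨd⟩
      obtain ⟨n, rfl⟩ := ConjClasses.exists_rep d
      have hmk : ConjClasses.mk (n : G) = ConjClasses.mk g :=
        congrArg (fun z => z.1.1) hΨd
      rw [ConjClasses.mk_eq_mk_iff_isConj] at hmk
      have : IsConj g (n : G) := hmk.symm
      rw [isConj_iff] at this
      obtain ⟨yy, hyy⟩ := this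
      obtain ⟨m, hmN, h, hhH, rfl⟩ := hdecomp yy
      have hng : (m * h) * g * (m * h)⁻¹ = (n : G) := hyy
      have hkey : (m : G) * ((h : G) * g * (h : G)⁻¹) * m⁻¹ = (n : G) := by
        rw [← hng]; group
      refine ⟨⟨h, hhH⟩, ?_⟩
      apply Subtype.ext
      apply Subtype.ext
      show ConjClasses.mk (⟨h * g * h⁻¹, hconjmem ⟨h, hhH⟩⟩ : ↥N) = ConjClasses.mk n
      rw [ConjClasses.mk_eq_mk_iff_isConj, isConj_iff]
      refine ⟨⟨m, hmN⟩, ?_⟩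
      apply Subtype.ext
      push_cast
      exact hkey
    exact (Nat.card_eq_of_bijective e ⟨heinj, hesurj⟩).symm
  have hA : Nat.card S = Nat.card ↥H * Nat.card T := myCardFibers Ψ hΨsurj _ hfib
  -- ### counting
  have hsplitG : Nat.card (ConjClasses G)
      = Nat.card {c // p c} + Nat.card {c // ¬ p c} := myCardSplit p
  have hone : (1 : ConjClasses G) = ConjClasses.mk 1 := ConjClasses.one_eq_mk_one
  have hp1 : p 1 := ⟨1, N.one_mem, hone.symm⟩
  have hsplitA : Nat.card {c : ConjClasses G // p c}
      = Nat.card T + 1 := by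
    have := myCardSplit (α := {c : ConjClasses G // p c}) (fun x => x.1 ≠ 1)
    rw [this]
    congr 1
    rw [Nat.card_eq_one_iff_unique]
    constructor
    · constructor
      rintro ⟨⟨c₁, h₁⟩, hc₁⟩ ⟨⟨c₂, h₂⟩, hc₂⟩
      apply Subtype.ext
      apply Subtype.ext
      show c₁ = c₂
      rw [not_ne_iff] at hc₁ hc₂
      rw [show c₁ = (⟨c₁, h₁⟩ : {c // p c}).1 from rfl, hc₁,
        show c₂ = (⟨c₂, h₂⟩ : {c // p c}).1 from rfl, hc₂]
    · exact ⟨⟨⟨1, hp1⟩, by simp⟩⟩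
  have hsplitH : Nat.card (ConjClasses ↥H)
      = Nat.card {d : ConjClasses ↥H // d ≠ 1} + 1 := by
    have := myCardSplit (α := ConjClasses ↥H) (fun d => d ≠ 1)
    rw [this]
    congr 1
    rw [Nat.card_eq_one_iff_unique]
    constructor
    · constructor
      rintro ⟨d₁, hd₁⟩ ⟨d₂, hd₂⟩
      apply Subtype.ext
      show d₁ = d₂
      rw [not_ne_iff] at hd₁ hd₂
      rw [hd₁, hd₂]
    · exact ⟨⟨1, by simp⟩⟩
  have hsplitN : Nat.card (ConjClasses ↥N)
      = Nat.card S + 1 := by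
    have := myCardSplit (α := ConjClasses ↥N) (fun d => d ≠ 1)
    rw [this]
    congr 1
    rw [Nat.card_eq_one_iff_unique]
    constructor
    · constructor
      rintro ⟨d₁, hd₁⟩ ⟨d₂, hd₂⟩
      apply Subtype.ext
      show d₁ = d₂
      rw [not_ne_iff] at hd₁ hd₂
      rw [hd₁, hd₂]
    · exact ⟨⟨1, by simp⟩⟩
  have hHpos : 0 < Nat.card ↥H := Nat.card_pos
  rw [hsplitG, hsplitA, hsplitH, hsplitN, hB, hA]
  rw [Nat.add_sub_cancel, Nat.mul_div_cancel_left _ hHpos]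
  omega
end
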